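/- arXiv:1911.12198 — 6 statements merged into one kernel-verified Lean document; each statement's English description precedes it below -/
import Mathlib

section
/- Let (X_i)_{i≥1} be i.i.d. random variables, let E be an event of the form that X_i lies in some fixed measurable set, with indicator variables of the event having success probability q ∈ [0,1], split into a joint event {X_i ∈ B ∩ C} with marginal event {X_i ∈ C}. Define O_n = ∑_{i=1}^n 1{X_i ∈ B ∩ C}, N_n = ∑_{i=1}^n 1{X_i ∈ C}, p = P(X_1 ∈ B | X_1 ∈ C) (assuming P(X_1 ∈ C) > 0), and for λ > 0 set φ(λ) = log(1 − p + e^λ p). Then the process W_n = exp(λ O_n − N_n φ(λ)), with W_0 = 1, is a martingale with respect to the filtration F_n = σ(X_1, …, X_n, 1{X_{n+1} ∈ C}); in particular E[W_n] = 1 for all n. -/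
/-!
The process is the product `W n = ∏_{i<n} g (X i)` of the factors
`g x = exp (λ·1{x ∈ B ∩ C} − 1{x ∈ C}·φ(λ))` (`countIncrement` below). The factor `g` equals `1`
off `C`, and `e^{-φ}(1 − p + e^λ p) = 1` gives it mean `1` under the law of `X 0`. Conditioning
`g (X n) − 1` on the past `σ(X 0, …, X (n−1))` gives `0` by independence, and adding the event
`{X n ∈ C}` changes nothing because the increment vanishes off it (a π-system argument). Pulling
out the `F n`-measurable factor `W n` gives the martingale property.
-/

open MeasureTheory ProbabilityTheory

namespace MeasurableSpace

variable {α : Type*}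

theorem isPiSystem_image2_inter {S T : Set (Set α)} (hS : IsPiSystem S) (hT : IsPiSystem T) :
    IsPiSystem (Set.image2 (· ∩ ·) S T) := by
  rintro _ ⟨a, ha, b, hb, rfl⟩ _ ⟨a', ha', b', hb', rfl⟩ hne
  rw [Set.inter_inter_inter_comm] at hne ⊢
  exact Set.mem_image2_of_mem (hS a ha a' ha' hne.left) (hT b hb b' hb' hne.right)

theorem generateFrom_image2_inter {S T : Set (Set α)} (hS : Set.univ ∈ S) (hT : Set.univ ∈ T) :
    generateFrom (Set.image2 (· ∩ ·) S T) = generateFrom S ⊔ generateFrom T := by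
  refine le_antisymm (generateFrom_le ?_) (sup_le (generateFrom_le fun s hs ↦ ?_)
    (generateFrom_le fun t ht ↦ ?_))
  · rintro _ ⟨s, hs, t, ht, rfl⟩
    exact MeasurableSet.inter
      (le_sup_left (b := generateFrom T) _ (measurableSet_generateFrom hs))
      (le_sup_right (a := generateFrom S) _ (measurableSet_generateFrom ht))
  · exact measurableSet_generateFrom ⟨s, hs, Set.univ, hT, Set.inter_univ s⟩
  · exact measurableSet_generateFrom ⟨Set.univ, hS, t, ht, Set.univ_inter t⟩

end MeasurableSpace

section CondExp

open MeasurableSpace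

variable {Ω : Type*} {m₀ : MeasurableSpace Ω} {μ : Measure Ω} [IsFiniteMeasure μ]
  {m₁ m : MeasurableSpace Ω} {Z : Ω → ℝ}

theorem setIntegral_eq_zero_of_indep (hm₁ : m₁ ≤ m₀) (hm : m ≤ m₀) (hind : Indep m₁ m μ)
    (hZ : StronglyMeasurable[m₁] Z) (hZ_int : Integrable Z μ) (hZ_mean : ∫ ω, Z ω ∂μ = 0)
    {A : Set Ω} (hA : MeasurableSet[m] A) : ∫ ω in A, Z ω ∂μ = 0 := by
  rw [← setIntegral_condExp hm hZ_int hA,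
    setIntegral_congr_ae (hm A hA) ((condExp_indep_eq hm₁ hm hZ hind).mono fun _ h _ ↦ h)]
  simp [hZ_mean]

theorem condExp_sup_generateFrom_singleton_eq_zero (hm₁ : m₁ ≤ m₀) (hm : m ≤ m₀)
    (hind : Indep m₁ m μ) (hZ : StronglyMeasurable[m₁] Z) (hZ_int : Integrable Z μ)
    (hZ_mean : ∫ ω, Z ω ∂μ = 0) {T : Set Ω} (hT : MeasurableSet[m₀] T)
    (hZT : ∀ ω ∉ T, Z ω = 0) :
    μ[Z | m ⊔ generateFrom {T}] =ᵐ[μ] 0 := by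
  have hle : m ⊔ generateFrom {T} ≤ m₀ :=
    sup_le hm (generateFrom_le fun _ hs ↦ (Set.mem_singleton_iff.mp hs) ▸ hT)
  have hgen : m ⊔ generateFrom {T} =
      generateFrom (Set.image2 (· ∩ ·) {s | MeasurableSet[m] s} {Set.univ, T}) := by
    rw [generateFrom_image2_inter (S := {s | MeasurableSet[m] s}) MeasurableSet.univ
      (Set.mem_insert _ _), generateFrom_measurableSet, MeasurableSpace.generateFrom_insert_univ]
  have hpi := isPiSystem_image2_inter (@isPiSystem_measurableSet _ m)
    (IsPiSystem.singleton T).insert_univ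
  have hA : ∀ A, MeasurableSet[m] A → ∫ ω in A, Z ω ∂μ = 0 :=
    fun A ↦ setIntegral_eq_zero_of_indep hm₁ hm hind hZ hZ_int hZ_mean
  have hvanish : ∀ s, MeasurableSet[m ⊔ generateFrom {T}] s → ∫ ω in s, Z ω ∂μ = 0 := by
    intro s hs
    induction s, hs using induction_on_inter hgen hpi with
    | empty => simp
    | basic _ hs =>
      obtain ⟨A, hAm, S, hS, rfl⟩ := hs
      rcases hS with rfl | rfl
      · simpa using hA A hAm
      · rw [← setIntegral_eq_of_subset_of_forall_sdiff_eq_zero (hm A hAm) Set.inter_subset_left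
          fun ω hω ↦ hZT ω fun hωT ↦ hω.2 ⟨hω.1, hωT⟩]
        exact hA A hAm
    | compl t ht iht => rw [setIntegral_compl (hle t ht) hZ_int, iht, hZ_mean, sub_zero]
    | iUnion f hdisj hf ihf =>
      rw [integral_iUnion (fun i ↦ hle _ (hf i)) hdisj hZ_int.integrableOn]
      simp [ihf]
  refine (ae_eq_condExp_of_forall_setIntegral_eq hle hZ_int (fun _ _ _ ↦ integrableOn_zero)
    (fun s hs _ ↦ ?_) aestronglyMeasurable_zero).symm
  simp [hvanish s hs]

end CondExp

section Martingale

variable {Ω : Type*} {m₀ : MeasurableSpace Ω} {μ : Measure Ω} [IsFiniteMeasure μ]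

theorem martingale_of_sub_eq_mul {ℱ : Filtration ℕ m₀} {W Z : ℕ → Ω → ℝ}
    (hadp : StronglyAdapted ℱ W) (hW : ∀ n, Integrable (W n) μ) (hZ : ∀ n, Integrable (Z n) μ)
    (hstep : ∀ n, W (n + 1) - W n = W n * Z n) (hcond : ∀ n, μ[Z n | ℱ n] =ᵐ[μ] 0) :
    Martingale W ℱ μ := by
  refine martingale_of_condExp_sub_eq_zero_nat hadp hW fun n ↦ ?_
  have hWZ : Integrable (W n * Z n) μ := hstep n ▸ (hW (n + 1)).sub (hW n)
  filter_upwards [condExp_mul_of_stronglyMeasurable_left (hadp n) hWZ (hZ n), hcond n]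
    with ω hpull hzero
  rw [hstep n, hpull, Pi.mul_apply, hzero, Pi.zero_apply, mul_zero]

end Martingale

namespace MeasureTheory.Filtration

open MeasurableSpace

variable {Ω E : Type*} {mΩ : MeasurableSpace Ω} [mE : MeasurableSpace E] {X : ℕ → Ω → E}

abbrev past (X : ℕ → Ω → E) (n : ℕ) : MeasurableSpace Ω :=
  ⨆ i ∈ Finset.range n, MeasurableSpace.comap (X i) mE

theorem comap_le_past {i n : ℕ} (h : i < n) : MeasurableSpace.comap (X i) mE ≤ past X n :=
  le_iSup₂ (f := fun i _ ↦ MeasurableSpace.comap (X i) mE) i (Finset.mem_range.mpr h)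

theorem past_mono : Monotone (past X) := fun _ _ hnk ↦
  iSup₂_le fun _ hi ↦ comap_le_past ((Finset.mem_range.mp hi).trans_le hnk)

theorem past_le (hX : ∀ i, Measurable (X i)) (n : ℕ) : past X n ≤ mΩ :=
  iSup₂_le fun i _ ↦ (hX i).comap_le

def pastAndNextMem (hX : ∀ i, Measurable (X i)) {C : Set E} (hC : MeasurableSet C) :
    Filtration ℕ mΩ where
  seq n := past X n ⊔ generateFrom {X n ⁻¹' C}
  mono' n k hnk := by
    refine sup_le ((past_mono hnk).trans le_sup_left) ?_
    rcases hnk.eq_or_lt with rfl | hlt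
    · exact le_sup_right
    refine (generateFrom_le ?_).trans ((comap_le_past hlt).trans le_sup_left)
    rintro _ rfl
    exact ⟨C, hC, rfl⟩
  le' n :=
    sup_le (past_le hX n) (generateFrom_le fun _ hs ↦ (Set.mem_singleton_iff.mp hs) ▸ hX n hC)

theorem past_le_pastAndNextMem (hX : ∀ i, Measurable (X i)) {C : Set E} (hC : MeasurableSet C)
    (n : ℕ) : past X n ≤ pastAndNextMem hX hC n :=
  le_sup_left

theorem _root_.ProbabilityTheory.iIndepFun.indep_comap_past {μ : Measure Ω}
    (hX : ∀ i, Measurable (X i)) (hindep : iIndepFun X μ) (n : ℕ) :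
    Indep (MeasurableSpace.comap (X n) mE) (past X n) μ := by
  have h := indep_iSup_of_disjoint (fun i ↦ (hX i).comap_le) hindep.iIndep
    (S := {n}) (T := ↑(Finset.range n)) (by simp)
  simpa [past] using h

end MeasureTheory.Filtration

open MeasureTheory.Filtration in
theorem martingale_prod_comp_of_eq_one_off {Ω E : Type*} {mΩ : MeasurableSpace Ω}
    [mE : MeasurableSpace E] {μ : Measure Ω} [IsProbabilityMeasure μ] {X : ℕ → Ω → E}
    (hX : ∀ i, Measurable (X i)) (hindep : iIndepFun X μ) {C : Set E} (hC : MeasurableSet C)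
    {g : E → ℝ} (hg : Measurable g) (hg_int : ∀ n, Integrable (fun ω ↦ g (X n ω)) μ)
    (hg_one : ∀ x ∉ C, g x = 1) (hg_mean : ∀ n, ∫ ω, g (X n ω) ∂μ = 1) :
    Martingale (fun n ω ↦ ∏ i ∈ Finset.range n, g (X i ω)) (pastAndNextMem hX hC) μ := by
  have hadp : StronglyAdapted (pastAndNextMem hX hC) fun n ω ↦ ∏ i ∈ Finset.range n, g (X i ω) :=
    fun n ↦ Measurable.stronglyMeasurable <| Finset.measurable_prod _ fun i hi ↦
      hg.comp <| (comap_measurable (X i)).mono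
        ((comap_le_past (Finset.mem_range.mp hi)).trans (past_le_pastAndNextMem hX hC n)) le_rfl
  have hint (n : ℕ) : Integrable (fun ω ↦ ∏ i ∈ Finset.range n, g (X i ω)) μ := by
    induction n with
    | zero => simp
    | succ n ih =>
      have hind := (hindep.comp (fun _ ↦ g) fun _ ↦ hg).indepFun_finsetProd_of_notMem
        (fun i ↦ hg.comp (hX i)) (Finset.notMem_range_self (n := n))
      convert hind.integrable_mul (by simpa [Finset.prod_fn] using ih) (hg_int n) using 1
      ext ω
      simp [Finset.prod_range_succ, Finset.prod_apply]
  refine martingale_of_sub_eq_mul hadp hint (Z := fun n ω ↦ g (X n ω) - 1)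
    (fun n ↦ (hg_int n).sub (integrable_const 1))
    (fun n ↦ by ext ω; simp only [Finset.prod_range_succ, Pi.sub_apply, Pi.mul_apply]; ring)
    fun n ↦ ?_
  exact condExp_sup_generateFrom_singleton_eq_zero (Z := fun ω ↦ g (X n ω) - 1)
    (hX n).comap_le (past_le hX n) (hindep.indep_comap_past hX n)
    ((hg.comp (comap_measurable (X n))).sub measurable_const).stronglyMeasurable
    ((hg_int n).sub (integrable_const 1))
    (by rw [integral_sub (hg_int n) (integrable_const 1), hg_mean n]; simp)
    (hX n hC) fun ω hω ↦ by simp [hg_one _ hω]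

section CountIncrement

variable {E : Type*} {B C : Set E} {p lam : ℝ}

theorem one_sub_add_exp_mul_pos (hp0 : 0 ≤ p) (hp1 : p ≤ 1) : 0 < 1 - p + Real.exp lam * p := by
  rcases hp1.lt_or_eq with hp1 | rfl
  · nlinarith [mul_nonneg (Real.exp_pos lam).le hp0]
  · simp [Real.exp_pos]

variable (B C p lam) in
noncomputable def countIncrement (x : E) : ℝ :=
  Real.exp (lam * (B ∩ C).indicator (fun _ ↦ (1 : ℝ)) x -
    C.indicator (fun _ ↦ (1 : ℝ)) x * Real.log (1 - p + Real.exp lam * p))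

theorem countIncrement_of_notMem {x : E} (hx : x ∉ C) : countIncrement B C p lam x = 1 := by
  simp [countIncrement, hx]

theorem countIncrement_sub_one (hpos : 0 < 1 - p + Real.exp lam * p) (x : E) :
    countIncrement B C p lam x - 1 = (Real.exp lam - 1) / (1 - p + Real.exp lam * p) *
      ((B ∩ C).indicator (fun _ ↦ (1 : ℝ)) x - p * C.indicator (fun _ ↦ (1 : ℝ)) x) := by
  by_cases hC : x ∈ C <;> by_cases hB : x ∈ B <;>
    simp only [countIncrement, Set.mem_inter_iff, hB, hC, and_self, and_true, and_false,
      not_false_eq_true, Set.indicator_of_mem, Set.indicator_of_notMem, mul_one, one_mul, mul_zero,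
      zero_mul, zero_sub, sub_self, mul_neg, Real.exp_zero, Real.exp_sub, Real.exp_neg,
      Real.exp_log hpos] <;>
    field_simp [hpos.ne', (mul_comm p (Real.exp lam) ▸ hpos).ne'] <;> ring

theorem measurable_countIncrement [MeasurableSpace E] (hB : MeasurableSet B)
    (hC : MeasurableSet C) : Measurable (countIncrement B C p lam) :=
  Real.measurable_exp.comp <| (measurable_const.mul (measurable_const.indicator (hB.inter hC))).sub
    ((measurable_const.indicator hC).mul measurable_const)

theorem integrable_countIncrement_and_integral_eq_one [MeasurableSpace E] {ν : Measure E}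
    [IsProbabilityMeasure ν] (hB : MeasurableSet B) (hC : MeasurableSet C)
    (hp : p = ν.real (B ∩ C) / ν.real C) :
    Integrable (countIncrement B C p lam) ν ∧ ∫ x, countIncrement B C p lam x ∂ν = 1 := by
  have hBC : ν.real (B ∩ C) ≤ ν.real C := measureReal_mono Set.inter_subset_right
  have hpos : 0 < 1 - p + Real.exp lam * p := one_sub_add_exp_mul_pos
    (hp ▸ div_nonneg measureReal_nonneg measureReal_nonneg)
    (hp ▸ div_le_one_of_le₀ hBC measureReal_nonneg)
  -- If `ν C = 0` then `p = 0` (junk value of `/`) and both sides vanish.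
  have hbalance : ν.real (B ∩ C) = p * ν.real C := by
    by_cases hC0 : ν.real C = 0
    · simp [hC0, (hC0 ▸ hBC).antisymm measureReal_nonneg]
    · rw [hp, div_mul_cancel₀ _ hC0]
  have hind {S : Set E} (hS : MeasurableSet S) : Integrable (S.indicator fun _ ↦ (1 : ℝ)) ν :=
    (integrable_const 1).indicator hS
  set a := (Real.exp lam - 1) / (1 - p + Real.exp lam * p)
  have hint : Integrable (fun x ↦ a * ((B ∩ C).indicator (fun _ ↦ (1 : ℝ)) x -
      p * C.indicator (fun _ ↦ (1 : ℝ)) x)) ν :=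
    ((hind (hB.inter hC)).sub ((hind hC).const_mul p)).const_mul a
  have hdecomp : countIncrement B C p lam = fun x ↦
      1 + a * ((B ∩ C).indicator (fun _ ↦ (1 : ℝ)) x - p * C.indicator (fun _ ↦ (1 : ℝ)) x) :=
    funext fun x ↦ eq_add_of_sub_eq' (countIncrement_sub_one hpos x)
  rw [hdecomp]
  refine ⟨(integrable_const 1).add hint, ?_⟩
  rw [integral_add (integrable_const 1) hint, integral_const_mul,
    integral_sub (hind (hB.inter hC)) ((hind hC).const_mul p), integral_const_mul,
    integral_indicator (hB.inter hC), integral_indicator hC]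
  simp [hbalance]

end CountIncrement

theorem exponential_count_martingale_general {Ω E : Type*} [mΩ : MeasurableSpace Ω]
    [mE : MeasurableSpace E]
    (μ : Measure Ω) [IsProbabilityMeasure μ]
    (X : ℕ → Ω → E) (hXmeas : ∀ i, Measurable (X i))
    (hid : ∀ i, Measure.map (X i) μ = Measure.map (X 0) μ)
    (hindep : iIndepFun X μ)
    (B C : Set E) (hB : MeasurableSet B) (hC : MeasurableSet C)
    (p : ℝ) (hp : p = (μ (X 0 ⁻¹' (B ∩ C))).toReal / (μ (X 0 ⁻¹' C)).toReal)
    (lam : ℝ)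
    (O N : ℕ → Ω → ℝ)
    (hO : ∀ n ω, O n ω =
      ∑ i ∈ Finset.range n, Set.indicator (X i ⁻¹' (B ∩ C)) (fun _ => (1 : ℝ)) ω)
    (hN : ∀ n ω, N n ω =
      ∑ i ∈ Finset.range n, Set.indicator (X i ⁻¹' C) (fun _ => (1 : ℝ)) ω)
    (W : ℕ → Ω → ℝ)
    (hW : ∀ n ω, W n ω =
      Real.exp (lam * O n ω - N n ω * Real.log (1 - p + Real.exp lam * p))) :
    (∀ ω, W 0 ω = 1) ∧
    ∃ ℱ : Filtration ℕ mΩ,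
      (∀ n, ℱ n =
        (⨆ i ∈ Finset.range n, MeasurableSpace.comap (X i) mE) ⊔
          MeasurableSpace.generateFrom {X n ⁻¹' C}) ∧
      Martingale W ℱ μ ∧
      ∀ n, ∫ ω, W n ω ∂μ = 1 := by
  have : IsProbabilityMeasure (μ.map (X 0)) :=
    Measure.isProbabilityMeasure_map (hXmeas 0).aemeasurable
  have hp_law : p = (μ.map (X 0)).real (B ∩ C) / (μ.map (X 0)).real C := by
    rw [map_measureReal_apply (hXmeas 0) (hB.inter hC), map_measureReal_apply (hXmeas 0) hC, hp]
    rfl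
  obtain ⟨hξ_int, hξ_mean⟩ :=
    integrable_countIncrement_and_integral_eq_one (lam := lam) hB hC hp_law
  have hξ := measurable_countIncrement (p := p) (lam := lam) hB hC
  have hW_prod : W = fun n ω ↦ ∏ i ∈ Finset.range n, countIncrement B C p lam (X i ω) := by
    ext n ω
    rw [hW, hO, hN, Finset.mul_sum, Finset.sum_mul, ← Finset.sum_sub_distrib, Real.exp_sum]
    rfl
  have hmart : Martingale W (Filtration.pastAndNextMem hXmeas hC) μ := hW_prod ▸
    martingale_prod_comp_of_eq_one_off hXmeas hindep hC hξ
      (fun n ↦ (integrable_map_measure hξ.aestronglyMeasurable (hXmeas n).aemeasurable).mp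
        (by rwa [hid n]))
      (fun _ ↦ countIncrement_of_notMem)
      (fun n ↦ by
        rwa [← integral_map (hXmeas n).aemeasurable hξ.aestronglyMeasurable, hid n])
  have hW0 (ω : Ω) : W 0 ω = 1 := by simp [hW_prod]
  refine ⟨hW0, _, fun n ↦ rfl, hmart, fun n ↦ ?_⟩
  simpa [hW0] using (hmart.setIntegral_eq (Nat.zero_le n) MeasurableSet.univ).symm

/-- Exponential martingale: let `(X_i)` be i.i.d., `B, C` measurable sets with
`P(X_0 ∈ C) > 0`, `p = P(X_0 ∈ B ∩ C)/P(X_0 ∈ C)`, `λ > 0`,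
`O_n = #{i < n : X_i ∈ B ∩ C}`, `N_n = #{i < n : X_i ∈ C}` and
`φ(λ) = log(1 − p + e^λ p)`. Then `W_n = exp(λ O_n − N_n φ(λ))` (with `W_0 = 1`)
is a martingale with respect to the filtration
`F_n = σ(X_0, …, X_{n−1}, 1{X_n ∈ C})`; in particular `E[W_n] = 1` for all `n`. -/
theorem exponential_count_martingale {Ω E : Type*} [mΩ : MeasurableSpace Ω]
    [mE : MeasurableSpace E]
    (μ : Measure Ω) [IsProbabilityMeasure μ]
    (X : ℕ → Ω → E) (hXmeas : ∀ i, Measurable (X i))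
    (hid : ∀ i, Measure.map (X i) μ = Measure.map (X 0) μ)
    (hindep : iIndepFun X μ)
    (B C : Set E) (hB : MeasurableSet B) (hC : MeasurableSet C)
    (hCpos : 0 < (μ (X 0 ⁻¹' C)).toReal)
    (p : ℝ) (hp : p = (μ (X 0 ⁻¹' (B ∩ C))).toReal / (μ (X 0 ⁻¹' C)).toReal)
    (lam : ℝ) (hlam : 0 < lam)
    (O N : ℕ → Ω → ℝ)
    (hO : ∀ n ω, O n ω =
      ∑ i ∈ Finset.range n, Set.indicator (X i ⁻¹' (B ∩ C)) (fun _ => (1 : ℝ)) ω)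
    (hN : ∀ n ω, N n ω =
      ∑ i ∈ Finset.range n, Set.indicator (X i ⁻¹' C) (fun _ => (1 : ℝ)) ω)
    (W : ℕ → Ω → ℝ)
    (hW : ∀ n ω, W n ω =
      Real.exp (lam * O n ω - N n ω * Real.log (1 - p + Real.exp lam * p))) :
    (∀ ω, W 0 ω = 1) ∧
    ∃ ℱ : Filtration ℕ mΩ,
      (∀ n, ℱ n =
        (⨆ i ∈ Finset.range n, MeasurableSpace.comap (X i) mE) ⊔
          MeasurableSpace.generateFrom {X n ⁻¹' C}) ∧
      Martingale W ℱ μ ∧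
      ∀ n, ∫ ω, W n ω ∂μ = 1 :=
  exponential_count_martingale_general (mΩ := mΩ) (mE := mE) μ X hXmeas hid hindep B C hB hC p hp
    lam O N hO hN W hW
end

section
/- If the random field satisfies the positivity condition (p(a_W) > 0 for every finite W ⊂ V and every configuration a_W ∈ A^W), then it satisfies the Markov intersection property: for every vertex v and any two Markov neighborhoods W₁ and W₂ of v, the set W₁ ∩ W₂ is also a Markov neighborhood of v. -/
open MeasureTheory

/-- Probability of the cylinder event determined by the configuration `a` on the
finite set of vertices `Δ`. -/
noncomputable def cylProb {V A : Type*} [MeasurableSpace A]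
    (μ : Measure (V → A)) (Δ : Finset V) (a : V → A) : ℝ :=
  (μ {x | ∀ w ∈ Δ, x w = a w}).toReal

/-- Conditional probability `p(a_v | a_Δ)` that `X v = av` given the configuration
`a` on the finite set `Δ` (junk value `0` if the conditioning event is null). -/
noncomputable def condProb {V A : Type*} [MeasurableSpace A]
    (μ : Measure (V → A)) (v : V) (av : A) (Δ : Finset V) (a : V → A) : ℝ :=
  (μ {x | x v = av ∧ ∀ w ∈ Δ, x w = a w}).toReal / cylProb μ Δ a

/-- `W` is a Markov neighborhood of `v`: `v ∉ W` and conditioning on any finite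
superset `Δ ⊇ W` not containing `v` gives the same conditional distribution of
`X v`, over all positive-probability configurations. -/
def IsMarkovNbhd {V A : Type*} [MeasurableSpace A]
    (μ : Measure (V → A)) (v : V) (W : Finset V) : Prop :=
  v ∉ W ∧ ∀ (Δ : Finset V), W ⊆ Δ → v ∉ Δ → ∀ (av : A) (a : V → A),
    0 < cylProb μ Δ a → condProb μ v av Δ a = condProb μ v av W a

namespace MarkovAux

variable {V A : Type*} [MeasurableSpace A]

/-- The measurable atom of a point of `A`. -/
def atom (a : A) : Set A :=
  {b | ∀ S : Set A, MeasurableSet S → a ∈ S → b ∈ S}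

lemma mem_atom_self (a : A) : a ∈ atom a := fun _ _ h => h

lemma atom_symm {a b : A} (h : b ∈ atom a) : a ∈ atom b := by
  intro S hS hbS
  by_contra haS
  exact (h Sᶜ hS.compl haS) hbS

lemma atom_trans {a b c : A} (hb : b ∈ atom a) (hc : c ∈ atom b) : c ∈ atom a :=
  fun S hS haS => hc S hS (hb S hS haS)

lemma atom_eq_of_mem {a b : A} (h : b ∈ atom a) : atom a = atom b :=
  Set.ext fun c => ⟨fun hc => atom_trans (atom_symm h) hc, fun hc => atom_trans h hc⟩

lemma measurableSet_atom [Finite A] (a : A) : MeasurableSet (atom a) := by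
  have : atom a = ⋂₀ {S : Set A | MeasurableSet S ∧ a ∈ S} := by
    ext b
    simp only [atom, Set.mem_setOf_eq, Set.mem_sInter]
    constructor
    · intro h S hS; exact h S hS.1 hS.2
    · intro h S hS haS; exact h S ⟨hS, haS⟩
  rw [this]
  exact MeasurableSet.sInter (Set.to_countable _) fun S hS => hS.1

/-- Any measurable set of configurations is saturated with respect to the
pointwise atom-equivalence. -/
lemma mem_of_rel {T : Set (V → A)} (hT : MeasurableSet T) {x y : V → A}
    (hxy : ∀ w, y w ∈ atom (x w)) (hx : x ∈ T) : y ∈ T := by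
  let m₀ : MeasurableSpace (V → A) :=
    { MeasurableSet' := fun T => ∀ x y : V → A, (∀ w, y w ∈ atom (x w)) → x ∈ T → y ∈ T
      measurableSet_empty := fun _ _ _ h => h
      measurableSet_compl := fun T hT x y hxy hx hy =>
        hx (hT y x (fun w => atom_symm (hxy w)) hy)
      measurableSet_iUnion := by
        intro f hf x y hxy hx
        obtain ⟨i, hi⟩ := Set.mem_iUnion.1 hx
        exact Set.mem_iUnion.2 ⟨i, hf i x y hxy hi⟩ }
  have hle : (MeasurableSpace.pi : MeasurableSpace (V → A)) ≤ m₀ := by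
    refine iSup_le fun w => ?_
    intro s hs
    obtain ⟨t, ht, rfl⟩ := hs
    intro x y hxy hx
    exact hxy w t ht hx
  exact hle T hT x y hxy hx

/-- The atomized cylinder set. -/
def cyl (D : Finset V) (c : V → A) : Set (V → A) :=
  {x | ∀ w ∈ D, x w ∈ atom (c w)}

lemma measurableSet_cyl [Finite A] (D : Finset V) (c : V → A) :
    MeasurableSet (cyl D c) := by
  have : cyl D c = ⋂ w ∈ D, (fun x : V → A => x w) ⁻¹' atom (c w) := by
    ext x; simp [cyl]
  rw [this]
  exact MeasurableSet.biInter D.countable_toSet fun w _ =>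
    (measurableSet_atom (c w)).preimage (measurable_pi_apply w)

lemma cyl_congr {D : Finset V} {c c' : V → A} (h : ∀ w ∈ D, c w = c' w) :
    cyl D c = cyl D c' := by
  unfold cyl
  ext x
  refine forall₂_congr fun w hw => ?_
  rw [h w hw]

/-- A cylinder has the same outer measure as its atomized version. -/
lemma measure_cyl_eq_hull (μ : Measure (V → A)) (D : Finset V) (c : V → A) :
    μ {x | ∀ w ∈ D, x w = c w} = μ (cyl D c) := by
  classical
  refine le_antisymm (measure_mono fun x hx w hw => hx w hw ▸ mem_atom_self _) ?_
  calc μ (cyl D c) ≤ μ (toMeasurable μ {x | ∀ w ∈ D, x w = c w}) := by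
        refine measure_mono fun y hy => ?_
        have hx : (fun w => if w ∈ D then c w else y w) ∈ {x : V → A | ∀ w ∈ D, x w = c w} :=
          fun w hw => if_pos hw
        refine mem_of_rel (measurableSet_toMeasurable μ _)
          (x := fun w => if w ∈ D then c w else y w) ?_
          (subset_toMeasurable μ _ hx)
        intro w
        by_cases hw : w ∈ D
        · simpa [hw] using hy w hw
        · simp [hw, mem_atom_self]
    _ = μ {x | ∀ w ∈ D, x w = c w} := measure_toMeasurable _

lemma cyl_insert [DecidableEq V] {D : Finset V} {u : V} (hu : u ∉ D)
    (c : V → A) (t : A) :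
    cyl (insert u D) (Function.update c u t) = ((fun x : V → A => x u) ⁻¹' atom t) ∩ cyl D c := by
  ext x
  simp only [cyl, Finset.mem_insert, Set.mem_inter_iff, Set.mem_setOf_eq, Set.mem_preimage]
  constructor
  · intro h
    refine ⟨by simpa using h u (Or.inl rfl), fun w hw => ?_⟩
    have := h w (Or.inr hw)
    rwa [Function.update_of_ne (ne_of_mem_of_not_mem hw hu)] at this
  · rintro ⟨h1, h2⟩ w hw
    rcases hw with rfl | hw
    · simpa using h1
    · rw [Function.update_of_ne (ne_of_mem_of_not_mem hw hu)]
      exact h2 w hw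

/-- The finite set of atoms of `A`. -/
noncomputable def atomFinset (A : Type*) [MeasurableSpace A] [Fintype A] : Finset (Set A) :=
  @Finset.image _ _ (Classical.decEq _) atom Finset.univ

lemma mem_atomFinset [Fintype A] {s : Set A} :
    s ∈ atomFinset A ↔ ∃ t : A, atom t = s := by
  letI := Classical.decEq (Set A)
  simp [atomFinset, Finset.mem_image]

/-- Finite total probability over the atoms at one site. -/
lemma measure_eq_sum_atoms [Fintype A] (μ : Measure (V → A)) (u : V)
    {T : Set (V → A)} (hT : MeasurableSet T) :
    μ T = ∑ s ∈ atomFinset A, μ (T ∩ (fun x : V → A => x u) ⁻¹' s) := by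
  have hcover : T = ⋃ s ∈ atomFinset A, T ∩ (fun x : V → A => x u) ⁻¹' s := by
    ext x
    constructor
    · intro hx
      exact Set.mem_biUnion (mem_atomFinset.2 ⟨x u, rfl⟩) ⟨hx, mem_atom_self _⟩
    · intro hx
      obtain ⟨s, -, hxs, -⟩ := Set.mem_iUnion₂.1 hx
      exact hxs
  have hdisj : (↑(atomFinset A) : Set (Set A)).PairwiseDisjoint
      fun s => T ∩ (fun x : V → A => x u) ⁻¹' s := by
    intro s hs s' hs' hne
    refine Set.disjoint_left.2 fun x hx hx' => hne ?_
    obtain ⟨t, rfl⟩ := mem_atomFinset.1 hs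
    obtain ⟨t', rfl⟩ := mem_atomFinset.1 hs'
    rw [atom_eq_of_mem hx.2, atom_eq_of_mem hx'.2]
  have hmeas : ∀ s ∈ atomFinset A, MeasurableSet (T ∩ (fun x : V → A => x u) ⁻¹' s) := by
    intro s hs
    obtain ⟨t, rfl⟩ := mem_atomFinset.1 hs
    exact hT.inter ((measurableSet_atom t).preimage (measurable_pi_apply u))
  conv_lhs => rw [hcover]
  exact measure_biUnion_finset hdisj hmeas

open ENNReal in
/-- Averaging lemma: if the measure of `N` inside every atomized cylinder over
`Δ ∪ E` (extending `a` on `Δ`) is proportional to the cylinder's measure with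
ratio `r`, then the same holds over the base `Δ`. -/
lemma avg [Fintype A] [DecidableEq V] (μ : Measure (V → A)) {N : Set (V → A)}
    (hN : MeasurableSet N) (r : ℝ≥0∞) :
    ∀ E Δ : Finset V, Disjoint E Δ → ∀ a : V → A,
      (∀ b : V → A, (∀ w, w ∉ E → b w = a w) →
        μ (N ∩ cyl (Δ ∪ E) b) = r * μ (cyl (Δ ∪ E) b)) →
      μ (N ∩ cyl Δ a) = r * μ (cyl Δ a) := by
  intro E
  induction E using Finset.induction with
  | empty =>
    intro Δ _ a hyp
    simpa using hyp a fun _ _ => rfl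
  | @insert u E' hu ih =>
    intro Δ hdisj a hyp
    have huΔ : u ∉ Δ := (Finset.disjoint_left.1 hdisj) (Finset.mem_insert_self u E')
    have hstep : ∀ t : A,
        μ (N ∩ cyl (insert u Δ) (Function.update a u t)) =
          r * μ (cyl (insert u Δ) (Function.update a u t)) := by
      intro t
      have hdisj' : Disjoint E' (insert u Δ) := by
        rw [Finset.disjoint_insert_right]
        exact ⟨hu, (Finset.disjoint_insert_left.1 hdisj).2⟩
      refine ih (insert u Δ) hdisj' (Function.update a u t) ?_
      intro b hb
      have heq : insert u Δ ∪ E' = Δ ∪ insert u E' := by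
        rw [Finset.insert_union, Finset.union_insert]
      have hb' : ∀ w, w ∉ insert u E' → b w = a w := by
        intro w hw
        have hwu : w ≠ u := fun h => hw (h ▸ Finset.mem_insert_self u E')
        have hwE' : w ∉ E' := fun h => hw (Finset.mem_insert_of_mem h)
        rw [hb w hwE', Function.update_of_ne hwu]
      rw [heq]
      exact hyp b hb'
    have hA := measure_eq_sum_atoms μ u (hN.inter (measurableSet_cyl Δ a))
    have hB := measure_eq_sum_atoms μ u (measurableSet_cyl (A := A) Δ a)
    rw [hA, hB, Finset.mul_sum]
    refine Finset.sum_congr rfl fun s hs => ?_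
    obtain ⟨t, rfl⟩ := mem_atomFinset.1 hs
    have hset : cyl Δ a ∩ (fun x : V → A => x u) ⁻¹' atom t =
        cyl (insert u Δ) (Function.update a u t) := by
      rw [cyl_insert huΔ, Set.inter_comm]
    rw [Set.inter_assoc, hset]
    exact hstep t

end MarkovAux

open MarkovAux in
/-- If the random field satisfies the positivity condition (every finite cylinder
has positive probability), then it satisfies the Markov intersection property:
the intersection of two Markov neighborhoods of `v` is a Markov neighborhood. -/
theorem markov_intersection_of_positivity {V A : Type*} [Countable V] [DecidableEq V]
    [MeasurableSpace A] [Fintype A] [Nonempty A]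
    (μ : Measure (V → A)) [IsProbabilityMeasure μ]
    (hpos : ∀ (W : Finset V) (a : V → A), 0 < cylProb μ W a)
    (v : V) (W₁ W₂ : Finset V)
    (h₁ : IsMarkovNbhd μ v W₁) (h₂ : IsMarkovNbhd μ v W₂) :
    IsMarkovNbhd μ v (W₁ ∩ W₂) := by
  classical
  obtain ⟨hv₁, hm₁⟩ := h₁
  obtain ⟨hv₂, hm₂⟩ := h₂
  have hvW : v ∉ W₁ ∩ W₂ := fun h => hv₁ (Finset.mem_inter.1 h).1
  refine ⟨hvW, ?_⟩
  intro Δ hWΔ hvΔ av a _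
  -- positivity in ENNReal form
  have hcylpos : ∀ (D : Finset V) (c : V → A), μ (cyl D c) ≠ 0 := by
    intro D c
    have h := hpos D c
    rw [cylProb, measure_cyl_eq_hull] at h
    intro h0
    rw [h0] at h
    simp at h
  have hcylfin : ∀ (D : Finset V) (c : V → A), μ (cyl D c) ≠ ⊤ :=
    fun D c => measure_ne_top μ _
  set N : Set (V → A) := (fun x : V → A => x v) ⁻¹' atom av with hNdef
  have hN : MeasurableSet N :=
    (measurableSet_atom av).preimage (measurable_pi_apply v)
  set r : Finset V → (V → A) → ENNReal :=
    fun D c => μ (N ∩ cyl D c) / μ (cyl D c) with hrdef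
  have hrfin : ∀ (D : Finset V) (c : V → A), r D c ≠ ⊤ :=
    fun D c => (ENNReal.div_lt_top (measure_ne_top μ _) (hcylpos D c)).ne
  have hmul : ∀ (D : Finset V) (c : V → A), μ (N ∩ cyl D c) = r D c * μ (cyl D c) :=
    fun D c => (ENNReal.div_mul_cancel (hcylpos D c) (hcylfin D c)).symm
  -- condProb in terms of r
  have hcond : ∀ (D : Finset V) (c : V → A), v ∉ D →
      condProb μ v av D c = (r D c).toReal := by
    intro D c hvD
    have hset : {x : V → A | x v = av ∧ ∀ w ∈ D, x w = c w} =
        {x | ∀ w ∈ insert v D, x w = Function.update c v av w} := by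
      ext x
      simp only [Set.mem_setOf_eq, Finset.mem_insert]
      constructor
      · rintro ⟨h1, h2⟩ w hw
        rcases hw with rfl | hw
        · simpa using h1
        · rw [Function.update_of_ne (ne_of_mem_of_not_mem hw hvD)]
          exact h2 w hw
      · intro h
        refine ⟨by simpa using h v (Or.inl rfl), fun w hw => ?_⟩
        have := h w (Or.inr hw)
        rwa [Function.update_of_ne (ne_of_mem_of_not_mem hw hvD)] at this
    have hnum : μ {x : V → A | x v = av ∧ ∀ w ∈ D, x w = c w} = μ (N ∩ cyl D c) := by
      rw [hset, measure_cyl_eq_hull, cyl_insert hvD, hNdef]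
    rw [condProb, cylProb, hnum, measure_cyl_eq_hull, hrdef, ENNReal.toReal_div]
  have hr_congr : ∀ (D : Finset V) (c c' : V → A), (∀ w ∈ D, c w = c' w) →
      r D c = r D c' := by
    intro D c c' h
    rw [hrdef]
    simp only [cyl_congr h]
  -- Markov hypotheses in r form
  have hm₁' : ∀ (Δ' : Finset V), W₁ ⊆ Δ' → v ∉ Δ' → ∀ c, r Δ' c = r W₁ c := by
    intro Δ' hsub hv' c
    have h := hm₁ Δ' hsub hv' av c (hpos Δ' c)
    rw [hcond Δ' c hv', hcond W₁ c hv₁] at h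
    exact (ENNReal.toReal_eq_toReal_iff' (hrfin _ _) (hrfin _ _)).1 h
  have hm₂' : ∀ (Δ' : Finset V), W₂ ⊆ Δ' → v ∉ Δ' → ∀ c, r Δ' c = r W₂ c := by
    intro Δ' hsub hv' c
    have h := hm₂ Δ' hsub hv' av c (hpos Δ' c)
    rw [hcond Δ' c hv', hcond W₂ c hv₂] at h
    exact (ENNReal.toReal_eq_toReal_iff' (hrfin _ _) (hrfin _ _)).1 h
  have hvU : v ∉ W₁ ∪ W₂ := by simp [hv₁, hv₂]
  -- step (i): r W₁ depends only on the restriction to W₁ ∩ W₂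
  have hval : ∀ c c' : V → A, (∀ w ∈ W₁ ∩ W₂, c w = c' w) → r W₁ c = r W₁ c' := by
    intro c c' hcc
    set b : V → A := fun w => if w ∈ W₁ then c w else c' w with hb
    have h1 : r W₁ c = r W₁ b := hr_congr _ _ _ fun w hw => (if_pos hw).symm
    have h2 : r W₁ b = r (W₁ ∪ W₂) b :=
      (hm₁' (W₁ ∪ W₂) Finset.subset_union_left hvU b).symm
    have h3 : r (W₁ ∪ W₂) b = r W₂ b :=
      hm₂' (W₁ ∪ W₂) Finset.subset_union_right hvU b
    have h4 : r W₂ b = r W₂ c' := by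
      refine hr_congr _ _ _ fun w hw => ?_
      by_cases h : w ∈ W₁
      · rw [hb]; simp only [if_pos h]
        exact hcc w (Finset.mem_inter.2 ⟨h, hw⟩)
      · rw [hb]; simp only [if_neg h]
    have h5 : r W₂ c' = r (W₁ ∪ W₂) c' :=
      (hm₂' (W₁ ∪ W₂) Finset.subset_union_right hvU c').symm
    have h6 : r (W₁ ∪ W₂) c' = r W₁ c' :=
      hm₁' (W₁ ∪ W₂) Finset.subset_union_left hvU c'
    rw [h1, h2, h3, h4, h5, h6]
  -- step (ii): conditioning on any superset of W₁ ∩ W₂ gives r W₁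
  have hmain : ∀ (Δ' : Finset V), W₁ ∩ W₂ ⊆ Δ' → v ∉ Δ' → ∀ c, r Δ' c = r W₁ c := by
    intro Δ' hWsub hv' c
    have havg : μ (N ∩ cyl Δ' c) = r W₁ c * μ (cyl Δ' c) := by
      refine avg μ hN (r W₁ c) (W₁ \ Δ') Δ' Finset.sdiff_disjoint c ?_
      intro b hb
      have hsub : W₁ ⊆ Δ' ∪ (W₁ \ Δ') := by
        intro w hw
        by_cases h : w ∈ Δ'
        · exact Finset.mem_union_left _ h
        · exact Finset.mem_union_right _ (Finset.mem_sdiff.2 ⟨hw, h⟩)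
      have hv'' : v ∉ Δ' ∪ (W₁ \ Δ') := by
        simp only [Finset.mem_union, Finset.mem_sdiff]
        push_neg
        exact ⟨hv', fun h => absurd h hv₁⟩
      have e1 : r (Δ' ∪ (W₁ \ Δ')) b = r W₁ b := hm₁' _ hsub hv'' b
      have e2 : r W₁ b = r W₁ c := by
        refine hval b c fun w hw => ?_
        refine hb w fun hmem => ?_
        exact (Finset.mem_sdiff.1 hmem).2 (hWsub hw)
      rw [hmul, e1, e2]
    rw [hrdef]
    simp only
    rw [havg, mul_div_assoc, ENNReal.div_self (hcylpos Δ' c) (hcylfin Δ' c), mul_one]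
  have goal1 : r Δ a = r W₁ a := hmain Δ hWΔ hvΔ a
  have goal2 : r (W₁ ∩ W₂) a = r W₁ a := hmain (W₁ ∩ W₂) (subset_refl _) hvW a
  rw [hcond Δ a hvΔ, hcond (W₁ ∩ W₂) a hvW, goal1, goal2]
end

section
/- There exists a random field not satisfying the positivity condition but satisfying the Markov intersection property: take the stationary Markov chain on A = {0,1} indexed by ℤ with transition matrix P(0,0) = P(0,1) = 1/2, P(1,0) = 1, P(1,1) = 0. Then the joint law of any three consecutive variables assigns probability zero to configurations containing two consecutive 1's (so positivity fails), yet for each node i the set {i−1, i+1} is a Markov neighborhood of i and is contained in every Markov neighborhood of i, so the Markov intersection property holds. -/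
open MeasureTheory

open TopologicalSpace
open scoped ENNReal NNReal

namespace Chain

instance : TopologicalSpace (Fin 2) := ⊥
instance : DiscreteTopology (Fin 2) := ⟨rfl⟩

abbrev G := ℤ → Fin 2

noncomputable def nu : Measure G := Measure.addHaarMeasure ⊤

instance : nu.IsAddLeftInvariant := by unfold nu; infer_instance

instance : IsProbabilityMeasure nu := by
  constructor
  have := Measure.addHaarMeasure_self (K₀ := (⊤ : PositiveCompacts G))
  rwa [PositiveCompacts.coe_top] at this

def cylSet (Δ : Finset ℤ) (a : G) : Set G := {x | ∀ w ∈ Δ, x w = a w}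

lemma measurableSet_cylSet (Δ : Finset ℤ) (a : G) : MeasurableSet (cylSet Δ a) := by
  have : cylSet Δ a = ⋂ w ∈ Δ, (fun x : G => x w) ⁻¹' {a w} := by
    ext x; simp [cylSet]
  rw [this]
  exact MeasurableSet.biInter Δ.countable_toSet fun w _ =>
    (measurable_pi_apply w) (measurableSet_singleton (a w))

lemma nu_cylSet_eq (Δ : Finset ℤ) (a b : G) : nu (cylSet Δ a) = nu (cylSet Δ b) := by
  have key : ∀ p q r : Fin 2, p - q + r = p ↔ r = q := by decide
  have h : ((a - b) + ·) ⁻¹' (cylSet Δ a) = cylSet Δ b := by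
    ext u
    simp only [cylSet, Set.mem_preimage, Set.mem_setOf_eq, Pi.add_apply, Pi.sub_apply]
    exact forall₂_congr fun w _ => key (a w) (b w) (u w)
  rw [← h, measure_preimage_add]

lemma nu_cylSet (Δ : Finset ℤ) (a : G) : nu (cylSet Δ a) = (2 ^ Δ.card)⁻¹ := by
  classical
  have hcover : (Set.univ : Set G) =
      ⋃ g : (Δ → Fin 2), cylSet Δ (fun t => if h : t ∈ Δ then g ⟨t, h⟩ else 0) := by
    ext u
    simp only [Set.mem_univ, Set.mem_iUnion, true_iff]
    refine ⟨fun t => u t, fun w hw => ?_⟩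
    simp [hw]
  have hdisj : Pairwise (Function.onFun Disjoint
      (fun g : (Δ → Fin 2) => cylSet Δ (fun t => if h : t ∈ Δ then g ⟨t, h⟩ else 0))) := by
    intro g g' hgg'
    rw [Function.onFun, Set.disjoint_left]
    intro u hu hu'
    apply hgg'
    funext ⟨t, ht⟩
    have h1 := hu t ht
    have h2 := hu' t ht
    simp only [dif_pos ht] at h1 h2
    rw [← h1, ← h2]
  have htot : (1 : ℝ≥0∞) = ∑ g : (Δ → Fin 2), nu (cylSet Δ a) := by
    have := measure_univ (μ := nu)
    rw [hcover, measure_iUnion hdisj (fun g => measurableSet_cylSet _ _)] at this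
    rw [← this, tsum_fintype]
    exact Finset.sum_congr rfl fun g _ => nu_cylSet_eq _ _ _
  rw [Finset.sum_const, Finset.card_univ] at htot
  have hcard : Fintype.card (Δ → Fin 2) = 2 ^ Δ.card := by
    rw [Fintype.card_fun]; simp
  rw [hcard, nsmul_eq_mul] at htot
  push_cast at htot
  have h2 : ((2 : ℝ≥0∞) ^ Δ.card) ≠ 0 := by positivity
  have h2' : ((2 : ℝ≥0∞) ^ Δ.card) ≠ ⊤ := ENNReal.pow_ne_top (by norm_num)
  have := congrArg (fun x => ((2 : ℝ≥0∞) ^ Δ.card)⁻¹ * x) htot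
  simp only [mul_one, ← mul_assoc, ENNReal.inv_mul_cancel h2 h2', one_mul] at this
  rw [← this]


-- run of odd length ending at t, with the run having length exactly 2k+1
def A (t : ℤ) (k : ℕ) : Set G :=
  {u | (∀ j : ℕ, j ≤ 2 * k → u (t - (j : ℤ)) = 1) ∧ u (t - (2 * (k : ℤ) + 1)) = 0}

def S (t : ℤ) : Set G := ⋃ k, A t k

open Classical in
noncomputable def X : G → G := fun u t => if u ∈ S t then 1 else 0

lemma fin2_ne_one (x : Fin 2) : x ≠ 1 ↔ x = 0 := by omega

lemma X_eq_one_iff {u : G} {t : ℤ} : X u t = 1 ↔ u ∈ S t := by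
  unfold X; split <;> simp_all

lemma X_eq_zero_iff {u : G} {t : ℤ} : X u t = 0 ↔ u ∉ S t := by
  rw [← fin2_ne_one, ne_eq, X_eq_one_iff]

lemma A_eq_cylSet (t : ℤ) (k : ℕ) :
    A t k = cylSet ((Finset.range (2 * k + 2)).image (fun j : ℕ => t - (j : ℤ)))
      (fun s => if s = t - (2 * (k : ℤ) + 1) then 0 else 1) := by
  ext u
  simp only [A, cylSet, Set.mem_setOf_eq, Finset.mem_image, Finset.mem_range]
  constructor
  · rintro ⟨h1, h2⟩ w ⟨j, hj, rfl⟩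
    by_cases hje : t - (j : ℤ) = t - (2 * (k : ℤ) + 1)
    · rw [if_pos hje, hje]
      exact h2
    · rw [if_neg hje]
      exact h1 j (by omega)
  · intro h
    constructor
    · intro j hj
      have hne : ¬ (t - (j : ℤ) = t - (2 * (k : ℤ) + 1)) := by omega
      have := h (t - (j : ℤ)) ⟨j, by omega, rfl⟩
      rwa [if_neg hne] at this
    · have := h (t - (2 * (k : ℤ) + 1)) ⟨2 * k + 1, by omega, by push_cast; ring⟩
      rwa [if_pos rfl] at this

lemma measurableSet_A (t : ℤ) (k : ℕ) : MeasurableSet (A t k) := by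
  rw [A_eq_cylSet]; exact measurableSet_cylSet _ _

lemma measurableSet_S (t : ℤ) : MeasurableSet (S t) :=
  MeasurableSet.iUnion (measurableSet_A t)

lemma measurableSet_X_one (t : ℤ) : MeasurableSet {u : G | X u t = 1} := by
  have : {u : G | X u t = 1} = S t := by ext u; exact X_eq_one_iff
  rw [this]; exact measurableSet_S t

lemma measurableSet_X (t : ℤ) (y : Fin 2) : MeasurableSet {u : G | X u t = y} := by
  match y with
  | 0 =>
    have : {u : G | X u t = 0} = (S t)ᶜ := by ext u; exact X_eq_zero_iff
    rw [this]; exact (measurableSet_S t).compl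
  | 1 => exact measurableSet_X_one t

lemma measurable_X : Measurable X := by
  rw [measurable_pi_iff]
  intro t
  classical
  have : (fun u : G => X u t) = fun u => if u ∈ S t then 1 else 0 := by
    funext u; unfold X; congr
  rw [this]
  exact Measurable.ite (measurableSet_S t) measurable_const measurable_const

lemma nu_A (t : ℤ) (k : ℕ) : nu (A t k) = ENNReal.ofReal ((1 / 4 : ℝ) ^ (k + 1)) := by
  rw [A_eq_cylSet, nu_cylSet]
  have hinj : Function.Injective (fun j : ℕ => t - (j : ℤ)) := by
    intro a b h; simp only at h; omega
  rw [Finset.card_image_of_injective _ hinj, Finset.card_range]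
  have : ((1 / 4 : ℝ)) ^ (k + 1) = ((1 / 2 : ℝ)) ^ (2 * k + 2) := by
    rw [show 2 * k + 2 = 2 * (k + 1) by ring, pow_mul]; norm_num
  rw [this, ENNReal.ofReal_pow (by norm_num)]
  rw [show ENNReal.ofReal (1 / 2 : ℝ) = 2⁻¹ by
    rw [ENNReal.ofReal_div_of_pos (by norm_num)]; norm_num]
  rw [ENNReal.inv_pow]

lemma A_disjoint (t : ℤ) : Pairwise (Function.onFun Disjoint (A t)) := by
  have key : ∀ k k' : ℕ, k < k' → Disjoint (A t k) (A t k') := by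
    intro k k' hkk'
    rw [Set.disjoint_left]
    rintro u ⟨h1, h2⟩ ⟨h1', h2'⟩
    have := h1' (2 * k + 1) (by omega)
    rw [show ((2 * k + 1 : ℕ) : ℤ) = 2 * (k : ℤ) + 1 by push_cast; ring, h2] at this
    exact absurd this (by decide)
  intro k k' hne
  rcases lt_or_gt_of_ne hne with h | h
  · exact key _ _ h
  · exact (key _ _ h).symm

lemma nu_S (t : ℤ) : nu (S t) = ENNReal.ofReal (1 / 3) := by
  rw [S, measure_iUnion (A_disjoint t) (measurableSet_A t)]
  simp_rw [nu_A]
  rw [← ENNReal.ofReal_tsum_of_nonneg (fun k => by positivity)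
    (by
      apply Summable.comp_injective (summable_geometric_of_lt_one (by norm_num) (by norm_num : (1/4:ℝ) < 1)) (add_left_injective 1) |>.congr
      intro k; rfl)]
  congr 1
  have : ∀ k : ℕ, ((1 / 4 : ℝ)) ^ (k + 1) = (1 / 4) ^ k * (1 / 4) := fun k => pow_succ _ _
  rw [tsum_congr this, tsum_mul_right, tsum_geometric_of_lt_one (by norm_num) (by norm_num)]
  norm_num


/-! ## New part -/

def N (t : ℤ) : Set G := {u | ∀ j : ℕ, u (t - (j : ℤ)) = 1}

lemma nu_N (t : ℤ) : nu (N t) = 0 := by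
  by_contra hpos
  obtain ⟨K, hK⟩ := ENNReal.exists_inv_two_pow_lt hpos
  have hsub : N t ⊆ cylSet ((Finset.range K).image (fun j : ℕ => t - (j : ℤ)))
      (fun _ => 1) := by
    intro u hu w hw
    simp only [Finset.mem_image, Finset.mem_range] at hw
    obtain ⟨j, _, rfl⟩ := hw
    exact hu j
  have hle := measure_mono (μ := nu) hsub
  rw [nu_cylSet] at hle
  have hinj : Function.Injective (fun j : ℕ => t - (j : ℤ)) := by
    intro a b h; simp only at h; omega
  rw [Finset.card_image_of_injective _ hinj, Finset.card_range] at hle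
  rw [← ENNReal.inv_pow] at hK
  exact absurd (lt_of_le_of_lt hle hK) (lt_irrefl _)

lemma S_rec (t : ℤ) :
    S t = ({u : G | u t = 1} ∩ {u | u ∉ S (t - 1)}) \ N t := by
  ext u
  simp only [S, Set.mem_diff, Set.mem_inter_iff, Set.mem_setOf_eq, Set.mem_iUnion]
  constructor
  · rintro ⟨k, h1, h2⟩
    refine ⟨⟨by simpa using h1 0 (by omega), ?_⟩, ?_⟩
    · rintro ⟨k', h1', h2'⟩
      rcases le_or_gt k k' with h | h
      · have := h1' (2 * k) (by omega)
        have e : t - 1 - ((2 * k : ℕ) : ℤ) = t - (2 * (k : ℤ) + 1) := by push_cast; ring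
        rw [e] at this
        simp [this] at h2
      · have := h1 (2 * k' + 2) (by omega)
        have e : t - ((2 * k' + 2 : ℕ) : ℤ) = t - 1 - (2 * (k' : ℤ) + 1) := by push_cast; ring
        rw [e] at this
        simp [this] at h2'
    · intro hN
      have := hN (2 * k + 1)
      have e : t - ((2 * k + 1 : ℕ) : ℤ) = t - (2 * (k : ℤ) + 1) := by push_cast; ring
      rw [e] at this
      simp [this] at h2
  · rintro ⟨⟨hut, hS0⟩, hN⟩
    have hN' : ∃ j : ℕ, ¬ u (t - (j : ℤ)) = 1 := by
      by_contra hc; push_neg at hc; exact hN fun j => hc j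
    set j₀ := Nat.find hN' with hj₀def
    have hj0 : ¬ u (t - (j₀ : ℤ)) = 1 := Nat.find_spec hN'
    have hmin : ∀ j < j₀, u (t - (j : ℤ)) = 1 := fun j hj =>
      of_not_not (Nat.find_min hN' hj)
    have hj0z : u (t - (j₀ : ℤ)) = 0 := (fin2_ne_one _).mp hj0
    have hj0pos : j₀ ≠ 0 := by
      intro h0
      rw [h0] at hj0
      simp only [Nat.cast_zero, sub_zero] at hj0
      exact hj0 hut
    rcases Nat.even_or_odd j₀ with ⟨m, hm⟩ | ⟨m, hm⟩
    · exfalso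
      apply hS0
      have hm1 : 1 ≤ m := by omega
      refine ⟨m - 1, fun j hj => ?_, ?_⟩
      · have e : t - 1 - (j : ℤ) = t - ((j + 1 : ℕ) : ℤ) := by push_cast; ring
        rw [e]
        exact hmin (j + 1) (by omega)
      · have e : t - 1 - (2 * ((m - 1 : ℕ) : ℤ) + 1) = t - ((j₀ : ℕ) : ℤ) := by
          have : ((m - 1 : ℕ) : ℤ) = (m : ℤ) - 1 := by omega
          rw [this]; push_cast; omega
        rw [e]
        exact hj0z
    · refine ⟨m, fun j hj => hmin j (by omega), ?_⟩
      have e : t - (2 * (m : ℤ) + 1) = t - ((j₀ : ℕ) : ℤ) := by push_cast; omega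
      rw [e]
      exact hj0z

lemma X_congr {u v : G} {t : ℤ} (h : ∀ j ≤ t, u j = v j) : X u t = X v t := by
  have hS : u ∈ S t ↔ v ∈ S t := by
    simp only [S, Set.mem_iUnion, A, Set.mem_setOf_eq]
    constructor <;> (
      rintro ⟨k, h1, h2⟩
      refine ⟨k, fun j hj => ?_, ?_⟩)
    · rw [← h _ (by omega)]; exact h1 j hj
    · rw [← h _ (by omega)]; exact h2
    · rw [h _ (by omega)]; exact h1 j hj
    · rw [h _ (by omega)]; exact h2
  unfold X
  by_cases hu : u ∈ S t
  · rw [if_pos hu, if_pos (hS.mp hu)]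
  · rw [if_neg hu, if_neg (fun hv => hu (hS.mpr hv))]

lemma flip (E : Set G) (hE : MeasurableSet E) (n m : ℤ) (hnm : n < m)
    (hdep : ∀ u v : G, (∀ j ≤ n, u j = v j) → (u ∈ E ↔ v ∈ E)) (z : Fin 2) :
    nu (E ∩ {u | u m = z}) = nu E / 2 := by
  classical
  set c : G := fun j => if j = m then 1 else 0 with hc
  have hkey : ∀ u : G, c + u ∈ E ↔ u ∈ E := by
    intro u
    apply hdep
    intro j hj
    have : j ≠ m := by omega
    simp [hc, this]
  have hfin : ∀ x z : Fin 2, (1 + x = z ↔ x = z + 1) := by decide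
  have h1 : (c + ·) ⁻¹' (E ∩ {u | u m = z}) = E ∩ {u | u m = z + 1} := by
    ext u
    simp only [Set.mem_preimage, Set.mem_inter_iff, Set.mem_setOf_eq, Pi.add_apply]
    rw [hkey u]
    have : c m = 1 := by simp [hc]
    rw [this, hfin]
  have hpre := measure_preimage_add nu c (E ∩ {u | u m = z})
  rw [h1] at hpre
  have hsplit : E = (E ∩ {u | u m = z}) ∪ (E ∩ {u | u m = z + 1}) := by
    ext u
    simp only [Set.mem_union, Set.mem_inter_iff, Set.mem_setOf_eq]
    have : u m = z ∨ u m = z + 1 := by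
      rcases Fin.exists_fin_two.mp ⟨u m, rfl⟩ with _ | _ <;> omega
    tauto
  have hdisj : Disjoint (E ∩ {u | u m = z}) (E ∩ {u | u m = z + 1}) := by
    rw [Set.disjoint_left]
    rintro u ⟨_, h1'⟩ ⟨_, h2'⟩
    simp only [Set.mem_setOf_eq] at h1' h2'
    rw [h1'] at h2'
    exact absurd h2' (by omega)
  have hm2 : MeasurableSet {u : G | u m = z + 1} :=
    (measurable_pi_apply m) (measurableSet_singleton _)
  have htot : nu E = nu (E ∩ {u | u m = z}) + nu (E ∩ {u | u m = z + 1}) := by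
    conv_lhs => rw [hsplit]
    exact measure_union hdisj (hE.inter hm2)
  rw [hpre, ← two_mul] at htot
  rw [ENNReal.eq_div_iff (by norm_num) (by norm_num)]
  exact htot.symm





noncomputable def Q : Matrix (Fin 2) (Fin 2) ℝ := !![1/2, 1/2; 1, 0]

lemma Q00 : Q 0 0 = 1/2 := by simp [Q]
lemma Q01 : Q 0 1 = 1/2 := by simp [Q]
lemma Q10 : Q 1 0 = 1 := by simp [Q]
lemma Q11 : Q 1 1 = 0 := by simp [Q]

lemma measure_union_null_right {s t : Set G} (ht : nu t = 0) : nu (s ∪ t) = nu s :=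
  le_antisymm ((measure_union_le s t).trans (by rw [ht, add_zero])) (measure_mono Set.subset_union_left)

lemma step1 (E : Set G) (hE : MeasurableSet E) (n : ℤ)
    (hdep : ∀ u v : G, (∀ j ≤ n, u j = v j) → (u ∈ E ↔ v ∈ E)) :
    nu (E ∩ {u | X u (n+1) = 1}) = nu (E ∩ {u | X u n = 0}) / 2 := by
  have hset : E ∩ {u | X u (n+1) = 1}
      = ((E ∩ {u | X u n = 0}) ∩ {u | u (n+1) = 1}) \ N (n+1) := by
    ext u
    simp only [Set.mem_inter_iff, Set.mem_diff, Set.mem_setOf_eq]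
    rw [X_eq_one_iff, X_eq_zero_iff, S_rec (n+1)]
    simp only [Set.mem_diff, Set.mem_inter_iff, Set.mem_setOf_eq, add_sub_cancel_right]
    tauto
  rw [hset, measure_diff_null (nu_N (n+1))]
  have hdep2 : ∀ u v : G, (∀ j ≤ n, u j = v j) → (u ∈ E ∩ {u | X u n = 0} ↔ v ∈ E ∩ {u | X u n = 0}) := by
    intro u v h
    simp only [Set.mem_inter_iff, Set.mem_setOf_eq]
    rw [hdep u v h, X_congr (fun j hj => h j hj)]
  exact flip _ (hE.inter (measurableSet_X n 0)) n (n+1) (by omega) hdep2 1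

lemma step0 (E : Set G) (hE : MeasurableSet E) (n : ℤ)
    (hdep : ∀ u v : G, (∀ j ≤ n, u j = v j) → (u ∈ E ↔ v ∈ E)) :
    nu (E ∩ {u | X u (n+1) = 0})
      = nu (E ∩ {u | X u n = 0}) / 2 + nu (E ∩ {u | X u n = 1}) := by
  have hf : ∀ x : Fin 2, ¬ x = 1 ↔ x = 0 := fun x => by omega
  have hset : E ∩ {u | X u (n+1) = 0} =
      (((E ∩ {u | X u n = 0}) ∩ {u | u (n+1) = 0}) ∪ (E ∩ {u | X u n = 1})) ∪ (E ∩ N (n+1)) := by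
    ext u
    simp only [Set.mem_union, Set.mem_inter_iff, Set.mem_setOf_eq]
    rw [X_eq_zero_iff, X_eq_zero_iff, X_eq_one_iff, S_rec (n+1)]
    simp only [Set.mem_diff, Set.mem_inter_iff, Set.mem_setOf_eq, add_sub_cancel_right]
    have h1 := hf (u (n+1))
    constructor
    · rintro ⟨huE, hno⟩
      by_cases hR : u ∈ S n
      · exact Or.inl (Or.inr ⟨huE, hR⟩)
      · by_cases hN : u ∈ N (n+1)
        · exact Or.inr ⟨huE, hN⟩
        · refine Or.inl (Or.inl ⟨⟨huE, hR⟩, ?_⟩)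
          rw [← h1]
          intro h11
          exact hno ⟨⟨h11, hR⟩, hN⟩
    · rintro ((⟨⟨huE, hR⟩, h0⟩ | ⟨huE, hR⟩) | ⟨huE, hN⟩)
      · exact ⟨huE, fun ⟨⟨h11, _⟩, _⟩ => (h1.mpr h0) h11⟩
      · exact ⟨huE, fun ⟨⟨_, hR'⟩, _⟩ => hR' hR⟩
      · exact ⟨huE, fun ⟨_, hN'⟩ => hN' hN⟩
  rw [hset, measure_union_null_right (measure_mono_null Set.inter_subset_right (nu_N (n+1)))]
  have hdisj : Disjoint ((E ∩ {u | X u n = 0}) ∩ {u | u (n+1) = 0}) (E ∩ {u | X u n = 1}) := by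
    rw [Set.disjoint_left]
    rintro u ⟨⟨_, h0⟩, _⟩ ⟨_, h1'⟩
    simp only [Set.mem_setOf_eq] at h0 h1'
    rw [h0] at h1'
    exact absurd h1' (by decide)
  have hm : MeasurableSet (E ∩ {u | X u n = 1}) := hE.inter (measurableSet_X n 1)
  rw [measure_union hdisj hm]
  congr 1
  have hdep2 : ∀ u v : G, (∀ j ≤ n, u j = v j) → (u ∈ E ∩ {u | X u n = 0} ↔ v ∈ E ∩ {u | X u n = 0}) := by
    intro u v h
    simp only [Set.mem_inter_iff, Set.mem_setOf_eq]
    rw [hdep u v h, X_congr (fun j hj => h j hj)]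
  exact flip _ (hE.inter (measurableSet_X n 0)) n (n+1) (by omega) hdep2 0

lemma iter (E : Set G) (hE : MeasurableSet E) (n : ℤ)
    (hdep : ∀ u v : G, (∀ j ≤ n, u j = v j) → (u ∈ E ↔ v ∈ E)) :
    ∀ (d : ℕ) (y : Fin 2), (nu (E ∩ {u | X u (n + (d : ℤ)) = y})).toReal
      = ∑ x : Fin 2, (nu (E ∩ {u | X u n = x})).toReal * (Q ^ d) x y := by
  intro d
  induction d with
  | zero =>
    intro y
    simp only [Nat.cast_zero, add_zero, pow_zero, Fin.sum_univ_two, Matrix.one_apply]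
    fin_cases y <;> simp
  | succ d ih =>
    intro y
    have hcast : n + ((d + 1 : ℕ) : ℤ) = (n + (d : ℕ)) + 1 := by push_cast; ring
    rw [hcast]
    have hdep' : ∀ u v : G, (∀ j ≤ n + (d : ℕ), u j = v j) → (u ∈ E ↔ v ∈ E) :=
      fun u v h => hdep u v (fun j hj => h j (by omega))
    have hfin : ∀ s : Set G, nu s ≠ ⊤ := fun s => measure_ne_top nu s
    match y with
    | 1 =>
      rw [step1 E hE _ hdep', ENNReal.toReal_div, ih 0]
      simp only [pow_succ, Matrix.mul_apply, Fin.sum_univ_two, Q00, Q01, Q10, Q11,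
        ENNReal.toReal_ofNat]
      ring
    | 0 =>
      rw [step0 E hE _ hdep',
        ENNReal.toReal_add ((ENNReal.div_lt_top (hfin _) (by norm_num)).ne) (hfin _),
        ENNReal.toReal_div, ih 0, ih 1]
      simp only [pow_succ, Matrix.mul_apply, Fin.sum_univ_two, Q00, Q01, Q10, Q11,
        ENNReal.toReal_ofNat]
      ring



/-! ## FDD -/

noncomputable def pi0 : Fin 2 → ℝ := ![2/3, 1/3]

noncomputable def w : ℤ → List ℤ → G → ℝ
  | _, [], _ => 1
  | n, m :: l, a => (Q ^ (m - n).toNat) (a n) (a m) * w m l a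

noncomputable def f0 : List ℤ → G → ℝ
  | [], _ => 1
  | n :: l, a => pi0 (a n) * w n l a

lemma nu_X_single (t : ℤ) (y : Fin 2) :
    (nu {u : G | X u t = y}).toReal = pi0 y := by
  have h1 : {u : G | X u t = 1} = S t := by ext u; exact X_eq_one_iff
  have hS : (nu (S t)).toReal = 1/3 := by
    rw [nu_S, ENNReal.toReal_ofReal (by norm_num)]
  match y with
  | 1 =>
    rw [h1, hS]; simp [pi0]
  | 0 =>
    have h0 : {u : G | X u t = 0} = (S t)ᶜ := by ext u; exact X_eq_zero_iff
    rw [h0, measure_compl (measurableSet_S t) (measure_ne_top nu _), measure_univ,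
      ENNReal.toReal_sub_of_le prob_le_one ENNReal.one_ne_top, ENNReal.toReal_one, hS]
    simp [pi0]
    norm_num

def lastD : ℤ → List ℤ → ℤ
  | n, [] => n
  | _, m :: l => lastD m l

def ev (L : List ℤ) (a : G) : Set G := {u | ∀ t ∈ L, X u t = a t}

lemma ev_nil (a : G) : ev [] a = Set.univ := by ext u; simp [ev]

lemma ev_cons (n : ℤ) (l : List ℤ) (a : G) :
    ev (n :: l) a = {u | X u n = a n} ∩ ev l a := by
  ext u; simp [ev]

lemma ev_append (l₁ l₂ : List ℤ) (a : G) :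
    ev (l₁ ++ l₂) a = ev l₁ a ∩ ev l₂ a := by
  ext u; simp [ev, forall_and, or_imp]

lemma measurableSet_ev (L : List ℤ) (a : G) : MeasurableSet (ev L a) := by
  induction L with
  | nil => rw [ev_nil]; exact MeasurableSet.univ
  | cons n l ih => rw [ev_cons]; exact (measurableSet_X n (a n)).inter ih

lemma ev_dep (L : List ℤ) (a : G) (n : ℤ) (hL : ∀ t ∈ L, t ≤ n) :
    ∀ u v : G, (∀ j ≤ n, u j = v j) → (u ∈ ev L a ↔ v ∈ ev L a) := by
  intro u v h
  simp only [ev, Set.mem_setOf_eq]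
  refine forall₂_congr fun t ht => ?_
  rw [X_congr (fun j hj => h j (le_trans hj (hL t ht)))]

lemma lastD_mem (n : ℤ) (l : List ℤ) : lastD n l ∈ n :: l := by
  induction l generalizing n with
  | nil => simp [lastD]
  | cons m l ih =>
    simp only [lastD]
    rcases List.mem_cons.mp (ih m) with h | h
    · rw [h]; simp
    · exact List.mem_cons_of_mem _ (List.mem_cons_of_mem _ h)

lemma lastD_max (n : ℤ) (l : List ℤ) (hs : (n :: l).Pairwise (· < ·)) :
    ∀ t ∈ n :: l, t ≤ lastD n l := by
  induction l generalizing n with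
  | nil => intro t ht; simp_all [lastD]
  | cons m l ih =>
    intro t ht
    have hs' : (m :: l).Pairwise (· < ·) := hs.tail
    rcases List.mem_cons.mp ht with h | h
    · simp only [lastD]
      have hm : m ≤ lastD m l := ih m hs' m (by simp)
      have hnm : n < m := (List.pairwise_cons.mp hs).1 m (by simp)
      omega
    · exact ih m hs' t h

lemma w_snoc (a : G) : ∀ (l : List ℤ) (n r : ℤ),
    w n (l ++ [r]) a = w n l a *
      (Q ^ ((r - lastD n l).toNat)) (a (lastD n l)) (a r) := by
  intro l
  induction l with
  | nil => intro n r; simp [w, lastD]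
  | cons m l ih =>
    intro n r
    rw [List.cons_append]
    show (Q ^ (m - n).toNat) (a n) (a m) * w m (l ++ [r]) a = _
    rw [ih m]
    simp only [w, lastD]
    ring





lemma f0_snoc (a : G) (n : ℤ) (l : List ℤ) (r : ℤ) :
    f0 (n :: (l ++ [r])) a = f0 (n :: l) a *
      (Q ^ ((r - lastD n l).toNat)) (a (lastD n l)) (a r) := by
  simp only [f0, w_snoc]
  ring

lemma lfdd (l : List ℤ) (a : G) (hs : l.Pairwise (· < ·)) :
    (nu (ev l a)).toReal = f0 l a := by
  cases l with
  | nil => simp [ev_nil, f0]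
  | cons n l =>
    revert hs
    induction l using List.reverseRecOn with
    | nil =>
      intro _
      have : ev [n] a = {u : G | X u n = a n} := by ext u; simp [ev]
      rw [this, nu_X_single]
      simp [f0, w, pi0]
    | append_singleton l r ih =>
      intro hs
      have hcons : (n :: (l ++ [r])) = (n :: l) ++ [r] := by simp
      have h3 := List.pairwise_append.mp (hcons ▸ hs)
      have hsl : (n :: l).Pairwise (· < ·) := h3.1
      have hlt : ∀ t ∈ n :: l, t < r := fun t ht => h3.2.2 t ht r (by simp)
      set p := lastD n l with hp
      have hpr : p < r := hlt p (lastD_mem n l)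
      have hd : (p + (((r - p).toNat : ℕ) : ℤ)) = r := by omega
      have hev : ev (n :: (l ++ [r])) a = ev (n :: l) a ∩ {u | X u r = a r} := by
        rw [hcons, ev_append]
        congr 1
        ext u; simp [ev]
      have hiter := iter (ev (n :: l) a) (measurableSet_ev _ _) p
        (ev_dep _ a p (lastD_max n l hsl)) ((r - p).toNat) (a r)
      rw [hd] at hiter
      rw [hev, hiter]
      have hsub : ∀ x : Fin 2, ev (n :: l) a ∩ {u | X u p = x}
          = if x = a p then ev (n :: l) a else ∅ := by
        intro x
        split_ifs with h
        · subst h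
          rw [Set.inter_eq_left]
          intro u hu
          exact hu p (lastD_mem n l)
        · ext u
          simp only [Set.mem_inter_iff, Set.mem_setOf_eq, Set.mem_empty_iff_false, iff_false]
          rintro ⟨hu, hx⟩
          exact h (hx ▸ (hu p (lastD_mem n l)).symm ▸ rfl)
      rw [Fin.sum_univ_two, hsub 0, hsub 1, f0_snoc, ← ih hsl, ← hp]
      have hap : a p = 0 ∨ a p = 1 := by omega
      rcases hap with h | h <;> rw [h] <;> simp


/-! ## sort surgery -/

instance : IsAntisymm ℤ (· < ·) := ⟨fun _ _ h1 h2 => absurd h2 (not_lt.mpr h1.le)⟩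

lemma sort_char (Δ : Finset ℤ) (L : List ℤ) (hL : L.Pairwise (· < ·))
    (hmem : ∀ x, x ∈ L ↔ x ∈ Δ) : Δ.sort (· ≤ ·) = L := by
  apply List.Perm.eq_of_pairwise' (Finset.sortedLT_sort Δ).pairwise hL
  apply List.perm_of_nodup_nodup_toFinset_eq (Δ.sort_nodup _) hL.nodup
  ext x
  simp only [List.mem_toFinset, Finset.mem_sort, hmem]

lemma decomp (Δ : Finset ℤ) (u v : ℤ) (hu : u ∈ Δ) (hv : v ∈ Δ) (huv : u < v)
    (hmid : ∀ t ∈ Δ, ¬(u < t ∧ t < v)) :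
    Δ.sort (· ≤ ·) = (Δ.filter (· < u)).sort (· ≤ ·) ++ u :: v ::
      (Δ.filter (fun t => v < t)).sort (· ≤ ·) ∧
    ∀ m, u < m → m < v → m ∉ Δ →
      (insert m Δ).sort (· ≤ ·) = (Δ.filter (· < u)).sort (· ≤ ·) ++ u :: m :: v ::
        (Δ.filter (fun t => v < t)).sort (· ≤ ·) := by
  set L₁ := (Δ.filter (· < u)).sort (· ≤ ·) with hL₁
  set L₂ := (Δ.filter (fun t => v < t)).sort (· ≤ ·) with hL₂
  have hL₁mem : ∀ x, x ∈ L₁ ↔ x ∈ Δ ∧ x < u := by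
    intro x; rw [hL₁, Finset.mem_sort, Finset.mem_filter]
  have hL₂mem : ∀ x, x ∈ L₂ ↔ x ∈ Δ ∧ v < x := by
    intro x; rw [hL₂, Finset.mem_sort, Finset.mem_filter]
  have hL₁s : L₁.Pairwise (· < ·) := (Finset.sortedLT_sort _).pairwise
  have hL₂s : L₂.Pairwise (· < ·) := (Finset.sortedLT_sort _).pairwise
  constructor
  · apply sort_char
    · rw [List.pairwise_append]
      refine ⟨hL₁s, ?_, ?_⟩
      · rw [List.pairwise_cons]
        refine ⟨?_, ?_⟩
        · intro t ht
          rcases List.mem_cons.mp ht with h | h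
          · omega
          · have := (hL₂mem t).mp h; omega
        · rw [List.pairwise_cons]
          exact ⟨fun t ht => by have := (hL₂mem t).mp ht; omega, hL₂s⟩
      · intro x hx t ht
        have hxu := (hL₁mem x).mp hx
        rcases List.mem_cons.mp ht with h | h
        · omega
        rcases List.mem_cons.mp h with h' | h'
        · omega
        · have := (hL₂mem t).mp h'; omega
    · intro x
      simp only [List.mem_append, List.mem_cons, hL₁mem, hL₂mem]
      constructor
      · rintro (⟨h, _⟩ | h | h | ⟨h, _⟩) <;> first | exact h | (subst h; assumption)
      · intro hx
        rcases lt_trichotomy x u with h | h | h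
        · exact Or.inl ⟨hx, h⟩
        · exact Or.inr (Or.inl h)
        · have := hmid x hx
          have : v ≤ x := by omega
          rcases eq_or_lt_of_le this with h' | h'
          · exact Or.inr (Or.inr (Or.inl h'.symm))
          · exact Or.inr (Or.inr (Or.inr ⟨hx, h'⟩))
  · intro m hum hmv hmΔ
    apply sort_char
    · rw [List.pairwise_append]
      refine ⟨hL₁s, ?_, ?_⟩
      · rw [List.pairwise_cons]
        refine ⟨?_, ?_⟩
        · intro t ht
          rcases List.mem_cons.mp ht with h | h
          · omega
          rcases List.mem_cons.mp h with h' | h'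
          · omega
          · have := (hL₂mem t).mp h'; omega
        · rw [List.pairwise_cons]
          refine ⟨?_, ?_⟩
          · intro t ht
            rcases List.mem_cons.mp ht with h | h
            · omega
            · have := (hL₂mem t).mp h; omega
          · rw [List.pairwise_cons]
            exact ⟨fun t ht => by have := (hL₂mem t).mp ht; omega, hL₂s⟩
      · intro x hx t ht
        have hxu := (hL₁mem x).mp hx
        rcases List.mem_cons.mp ht with h | h
        · omega
        rcases List.mem_cons.mp h with h' | h'
        · omega
        rcases List.mem_cons.mp h' with h'' | h''
        · omega
        · have := (hL₂mem t).mp h''; omega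
    · intro x
      simp only [List.mem_append, List.mem_cons, hL₁mem, hL₂mem, Finset.mem_insert]
      constructor
      · rintro (⟨h, _⟩ | h | h | h | ⟨h, _⟩) <;>
          first | (exact Or.inr h) | (subst h; first | exact Or.inl rfl | exact Or.inr (by assumption))
      · rintro (rfl | hx)
        · exact Or.inr (Or.inr (Or.inl rfl))
        rcases lt_trichotomy x u with h | h | h
        · exact Or.inl ⟨hx, h⟩
        · exact Or.inr (Or.inl h)
        · have := hmid x hx
          have : v ≤ x := by omega
          rcases eq_or_lt_of_le this with h' | h'
          · exact Or.inr (Or.inr (Or.inr (Or.inl h'.symm)))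
          · exact Or.inr (Or.inr (Or.inr (Or.inr ⟨hx, h'⟩)))

lemma w_nil (n : ℤ) (a : G) : w n [] a = 1 := rfl
lemma w_cons (n m : ℤ) (l : List ℤ) (a : G) :
    w n (m :: l) a = (Q ^ (m - n).toNat) (a n) (a m) * w m l a := rfl
lemma f0_cons (n : ℤ) (l : List ℤ) (a : G) : f0 (n :: l) a = pi0 (a n) * w n l a := rfl

/-! ## Q facts -/

lemma Qnonneg : ∀ (d : ℕ) (x y : Fin 2), 0 ≤ (Q ^ d) x y := by
  intro d
  induction d with
  | zero => intro x y; rw [pow_zero, Matrix.one_apply]; split <;> norm_num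
  | succ d ih =>
    intro x y
    rw [pow_succ, Matrix.mul_apply, Fin.sum_univ_two]
    have h0 := ih x 0
    have h1 := ih x 1
    rcases (by omega : y = 0 ∨ y = 1) with rfl | rfl
    · rw [Q00, Q10]; nlinarith
    · rw [Q01, Q11]; nlinarith

lemma Qrowsum : ∀ (d : ℕ) (x : Fin 2), (Q ^ d) x 0 + (Q ^ d) x 1 = 1 := by
  intro d
  induction d with
  | zero => intro x; rw [pow_zero]; fin_cases x <;> simp [Matrix.one_apply]
  | succ d ih =>
    intro x
    rw [pow_succ, Matrix.mul_apply, Matrix.mul_apply, Fin.sum_univ_two, Fin.sum_univ_two]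
    have := ih x
    simp only [Q00, Q01, Q10, Q11]
    linarith

lemma Qpos0 : ∀ (d : ℕ), 1 ≤ d → ∀ x, 0 < (Q ^ d) x 0 := by
  rintro (_ | e) h x
  · omega
  rw [pow_succ, Matrix.mul_apply, Fin.sum_univ_two, Q00, Q10]
  have h0 := Qnonneg e x 0
  have h1 := Qnonneg e x 1
  have hs := Qrowsum e x
  nlinarith

lemma Qpos1 : ∀ (d : ℕ), 2 ≤ d → ∀ x, 0 < (Q ^ d) x 1 := by
  rintro (_ | e) h x
  · omega
  rw [pow_succ, Matrix.mul_apply, Fin.sum_univ_two, Q01, Q11]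
  have h0 := Qpos0 e (by omega) x
  nlinarith

lemma Q2_00 : (Q ^ 2) 0 0 = 3/4 := by
  rw [pow_two, Matrix.mul_apply, Fin.sum_univ_two, Q00, Q01, Q10]; norm_num
lemma Q2_01 : (Q ^ 2) 0 1 = 1/4 := by
  rw [pow_two, Matrix.mul_apply, Fin.sum_univ_two, Q00, Q01, Q11]; norm_num
lemma Q2_10 : (Q ^ 2) 1 0 = 1/2 := by
  rw [pow_two, Matrix.mul_apply, Fin.sum_univ_two, Q10, Q00, Q11]; norm_num
lemma Q2_11 : (Q ^ 2) 1 1 = 1/2 := by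
  rw [pow_two, Matrix.mul_apply, Fin.sum_univ_two, Q10, Q01, Q11]; norm_num

lemma Q2pos (x z : Fin 2) : 0 < (Q ^ 2) x z := by
  fin_cases z
  · exact Qpos0 2 (by omega) x
  · exact Qpos1 2 (by omega) x

/-! ## f0 algebra -/

lemma w_congr (a b : G) : ∀ (l : List ℤ) (n : ℤ), (∀ x ∈ n :: l, a x = b x) →
    w n l a = w n l b := by
  intro l
  induction l with
  | nil => intro n _; rfl
  | cons m l ih =>
    intro n h
    rw [w_cons, w_cons, h n (by simp), h m (by simp), ih m (fun x hx => h x (by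
      rcases List.mem_cons.mp hx with h' | h'
      · subst h'; simp
      · simp [h']))]

lemma f0_congr (a b : G) (L : List ℤ) (h : ∀ x ∈ L, a x = b x) : f0 L a = f0 L b := by
  cases L with
  | nil => rfl
  | cons n l =>
    rw [f0_cons, f0_cons, h n (by simp), w_congr a b l n h]

lemma w_ins (a : G) (x y z : ℤ) (l₂ : List ℤ) :
    ∀ (l₁ : List ℤ) (n : ℤ),
    w n (l₁ ++ x :: y :: z :: l₂) a * (Q ^ ((z - x).toNat)) (a x) (a z)
      = w n (l₁ ++ x :: z :: l₂) a *
        ((Q ^ ((y - x).toNat)) (a x) (a y) * (Q ^ ((z - y).toNat)) (a y) (a z)) := by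
  intro l₁
  induction l₁ with
  | nil =>
    intro n
    simp only [List.nil_append, w_cons]
    ring
  | cons h l ih =>
    intro n
    simp only [List.cons_append]
    rw [w_cons, w_cons, mul_assoc, mul_assoc, ih h]

lemma f0_ins (a : G) (x y z : ℤ) (l₁ l₂ : List ℤ) :
    f0 (l₁ ++ x :: y :: z :: l₂) a * (Q ^ ((z - x).toNat)) (a x) (a z)
      = f0 (l₁ ++ x :: z :: l₂) a *
        ((Q ^ ((y - x).toNat)) (a x) (a y) * (Q ^ ((z - y).toNat)) (a y) (a z)) := by
  cases l₁ with
  | nil =>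
    simp only [List.nil_append, f0_cons, w_cons]
    ring
  | cons h l =>
    simp only [List.cons_append]
    rw [f0_cons, f0_cons, mul_assoc, mul_assoc, w_ins a x y z l₂ l h]

lemma pi0_pos (x : Fin 2) : 0 < pi0 x := by fin_cases x <;> norm_num [pi0]

lemma wpos (a : G) : ∀ (l : List ℤ) (n : ℤ), ((n :: l).Pairwise (· < ·)) →
    (∀ p ∈ n :: l, ∀ q ∈ n :: l, q = p + 1 → ¬(a p = 1 ∧ a q = 1)) →
    0 < w n l a := by
  intro l
  induction l with
  | nil => intro n _ _; simp [w]
  | cons m l ih =>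
    intro n hs hgood
    rw [w_cons]
    apply mul_pos
    · have hnm : n < m := (List.pairwise_cons.mp hs).1 m (by simp)
      have hd : 1 ≤ (m - n).toNat := by omega
      rcases eq_or_lt_of_le hd with h1 | h1
      · -- gap exactly 1 : m = n + 1
        have hm : m = n + 1 := by omega
        have := hgood n (by simp) m (by simp) hm
        rw [← h1, pow_one]
        have ha : ¬(a n = 1 ∧ a m = 1) := this
        have h2 : ∀ p q : Fin 2, ¬(p = 1 ∧ q = 1) → 0 < Q p q := by
          intro p q h
          rcases (by omega : p = 0 ∨ p = 1) with rfl | rfl <;>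
            rcases (by omega : q = 0 ∨ q = 1) with rfl | rfl
          · rw [Q00]; norm_num
          · rw [Q01]; norm_num
          · rw [Q10]; norm_num
          · exact absurd ⟨rfl, rfl⟩ h
        exact h2 _ _ ha
      · -- gap ≥ 2
        have : a m = 0 ∨ a m = 1 := by omega
        rcases this with h | h <;> rw [h]
        · exact Qpos0 _ (by omega) _
        · exact Qpos1 _ (by omega) _
    · exact ih m hs.tail (fun p hp q hq hpq =>
        hgood p (List.mem_cons_of_mem _ hp) q (List.mem_cons_of_mem _ hq) hpq)

lemma f0pos (a : G) (L : List ℤ) (hs : L.Pairwise (· < ·))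
    (hgood : ∀ p ∈ L, ∀ q ∈ L, q = p + 1 → ¬(a p = 1 ∧ a q = 1)) : 0 < f0 L a := by
  cases L with
  | nil => norm_num [f0]
  | cons n l => exact mul_pos (pi0_pos _) (wpos a l n hs hgood)



noncomputable def mu : Measure (ℤ → Fin 2) := nu.map X

instance : IsProbabilityMeasure mu := Measure.isProbabilityMeasure_map measurable_X.aemeasurable

lemma mu_cyl (Δ : Finset ℤ) (a : G) : mu (cylSet Δ a) = nu (ev (Δ.sort (· ≤ ·)) a) := by
  rw [mu, Measure.map_apply measurable_X (measurableSet_cylSet Δ a)]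
  congr 1
  ext u
  simp only [Set.mem_preimage, cylSet, Set.mem_setOf_eq, ev]
  exact ⟨fun h t ht => h t ((Finset.mem_sort _).mp ht),
    fun h t ht => h t ((Finset.mem_sort _).mpr ht)⟩

lemma MAIN (Δ : Finset ℤ) (a : G) : cylProb mu Δ a = f0 (Δ.sort (· ≤ ·)) a := by
  unfold cylProb
  have hset : {x : ℤ → Fin 2 | ∀ w ∈ Δ, x w = a w} = cylSet Δ a := rfl
  rw [hset, mu_cyl, lfdd _ a (Finset.sortedLT_sort Δ).pairwise]

/-! ## conditional probabilities -/

lemma cyl_inter_eq (v : ℤ) (av : Fin 2) (Δ : Finset ℤ) (hv : v ∉ Δ) (a : G) :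
    {x : ℤ → Fin 2 | x v = av ∧ ∀ w ∈ Δ, x w = a w}
      = {x : ℤ → Fin 2 | ∀ w ∈ insert v Δ, x w = Function.update a v av w} := by
  ext x
  simp only [Set.mem_setOf_eq, Finset.mem_insert]
  constructor
  · rintro ⟨h1, h2⟩ w hw
    rcases hw with rfl | hw
    · rw [Function.update_self]; exact h1
    · rw [Function.update_of_ne (by rintro rfl; exact hv hw)]; exact h2 w hw
  · intro h
    constructor
    · have := h v (Or.inl rfl); rwa [Function.update_self] at this
    · intro w hw
      have := h w (Or.inr hw)
      rwa [Function.update_of_ne (by rintro rfl; exact hv hw)] at this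

lemma numer_eq (v : ℤ) (av : Fin 2) (Δ : Finset ℤ) (hv : v ∉ Δ) (a : G) :
    (mu {x | x v = av ∧ ∀ w ∈ Δ, x w = a w}).toReal
      = f0 ((insert v Δ).sort (· ≤ ·)) (Function.update a v av) := by
  rw [cyl_inter_eq v av Δ hv a]
  exact MAIN (insert v Δ) (Function.update a v av)

lemma cylProb_mono (W Δ : Finset ℤ) (h : W ⊆ Δ) (a : G) :
    cylProb mu Δ a ≤ cylProb mu W a := by
  unfold cylProb
  exact ENNReal.toReal_mono (measure_ne_top _ _)
    (measure_mono (fun x hx w hw => hx w (h hw)))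

lemma cylProb_pos (Δ : Finset ℤ) (a : G)
    (hgood : ∀ p ∈ Δ, ∀ q ∈ Δ, q = p + 1 → ¬(a p = 1 ∧ a q = 1)) :
    0 < cylProb mu Δ a := by
  rw [MAIN]
  exact f0pos a _ (Finset.sortedLT_sort Δ).pairwise
    (fun p hp q hq => hgood p ((Finset.mem_sort _).mp hp) q ((Finset.mem_sort _).mp hq))

lemma cond_formula (i : ℤ) (Δ : Finset ℤ) (a : G) (av : Fin 2)
    (hiΔ : i ∉ Δ) (hl : i - 1 ∈ Δ) (hr : i + 1 ∈ Δ)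
    (hpos : 0 < cylProb mu Δ a) :
    condProb mu i av Δ a
      = Q (a (i-1)) av * Q av (a (i+1)) / (Q ^ 2) (a (i-1)) (a (i+1)) := by
  have hmid : ∀ t ∈ Δ, ¬(i - 1 < t ∧ t < i + 1) := by
    rintro t ht ⟨h1, h2⟩
    have : t = i := by omega
    exact hiΔ (this ▸ ht)
  obtain ⟨hs, hins⟩ := decomp Δ (i-1) (i+1) hl hr (by omega) hmid
  have hins' := hins i (by omega) (by omega) hiΔ
  set L₁ := (Δ.filter (· < i - 1)).sort (· ≤ ·) with hL₁
  set L₂ := (Δ.filter (fun t => i + 1 < t)).sort (· ≤ ·) with hL₂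
  set a' := Function.update a i av with ha'
  have hmemL : ∀ x ∈ L₁ ++ (i-1) :: (i+1) :: L₂, a' x = a x := by
    intro x hx
    have hxΔ : x ∈ Δ := by rw [← Finset.mem_sort (· ≤ ·), hs]; exact hx
    rw [ha', Function.update_of_ne (by rintro rfl; exact hiΔ hxΔ)]
  have hvals : a' (i-1) = a (i-1) ∧ a' (i+1) = a (i+1) ∧ a' i = av := by
    refine ⟨?_, ?_, ?_⟩
    · rw [ha', Function.update_of_ne (by omega)]
    · rw [ha', Function.update_of_ne (by omega)]
    · rw [ha', Function.update_self]
  have hkey := f0_ins a' (i-1) i (i+1) L₁ L₂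
  rw [show ((i+1) - (i-1)).toNat = 2 by omega, show (i - (i-1)).toNat = 1 by omega,
    show ((i+1) - i).toNat = 1 by omega, pow_one] at hkey
  have hnum : (mu {x | x i = av ∧ ∀ w ∈ Δ, x w = a w}).toReal
      = f0 (L₁ ++ (i-1) :: i :: (i+1) :: L₂) a' := by
    rw [numer_eq i av Δ hiΔ a, hins']
  have hden : cylProb mu Δ a = f0 (L₁ ++ (i-1) :: (i+1) :: L₂) a := by
    rw [MAIN, hs]
  have hden' : f0 (L₁ ++ (i-1) :: (i+1) :: L₂) a' = cylProb mu Δ a := by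
    rw [hden]; exact f0_congr a' a _ hmemL
  rw [hvals.1, hvals.2.1, hvals.2.2, hden'] at hkey
  have hq2 : 0 < (Q ^ 2) (a (i-1)) (a (i+1)) := Q2pos _ _
  unfold condProb
  rw [hnum]
  rw [div_eq_div_iff hpos.ne' hq2.ne']
  linarith [hkey]

lemma markov_of_mem (i : ℤ) (W : Finset ℤ) (hl : i - 1 ∈ W) (hr : i + 1 ∈ W)
    (hi : i ∉ W) : IsMarkovNbhd mu i W := by
  refine ⟨hi, fun Δ hWΔ hiΔ av a hpos => ?_⟩
  have hposW : 0 < cylProb mu W a := lt_of_lt_of_le hpos (cylProb_mono W Δ hWΔ a)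
  rw [cond_formula i Δ a av hiΔ (hWΔ hl) (hWΔ hr) hpos,
    cond_formula i W a av hi hl hr hposW]

lemma condProb_congr (v : ℤ) (av : Fin 2) (W : Finset ℤ) (a b : G)
    (h : ∀ w ∈ W, a w = b w) : condProb mu v av W a = condProb mu v av W b := by
  unfold condProb cylProb
  have h1 : {x : ℤ → Fin 2 | x v = av ∧ ∀ w ∈ W, x w = a w}
      = {x | x v = av ∧ ∀ w ∈ W, x w = b w} := by
    ext x
    simp only [Set.mem_setOf_eq]
    refine and_congr_right fun _ => forall₂_congr fun t ht => ?_
    rw [h t ht]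
  have h2 : {x : ℤ → Fin 2 | ∀ w ∈ W, x w = a w} = {x | ∀ w ∈ W, x w = b w} := by
    ext x
    refine forall₂_congr fun t ht => ?_
    rw [h t ht]
  rw [h1, h2]

lemma min_mem (i : ℤ) (W : Finset ℤ) (hW : IsMarkovNbhd mu i W) :
    i - 1 ∈ W ∧ i + 1 ∈ W := by
  obtain ⟨hiW, hM⟩ := hW
  classical
  set Δ : Finset ℤ := insert (i-1) (insert (i+1) W) with hΔ
  have hl : i - 1 ∈ Δ := Finset.mem_insert_self _ _
  have hr : i + 1 ∈ Δ := Finset.mem_insert_of_mem (Finset.mem_insert_self _ _)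
  have hiΔ : i ∉ Δ := by
    intro h
    rcases Finset.mem_insert.mp h with h | h
    · omega
    rcases Finset.mem_insert.mp h with h | h
    · omega
    · exact hiW h
  have hsub : W ⊆ Δ := fun t ht =>
    Finset.mem_insert_of_mem (Finset.mem_insert_of_mem ht)
  set a0 : G := fun _ => 0 with ha0
  have hpos0 : 0 < cylProb mu Δ a0 := by
    apply cylProb_pos
    intro p _ q _ _ h
    exact absurd h.1 (by simp [ha0])
  have hc0 : condProb mu i 0 Δ a0 = 1/3 := by
    rw [cond_formula i Δ a0 0 hiΔ hl hr hpos0]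
    show Q 0 0 * Q 0 0 / (Q ^ 2) 0 0 = 1/3
    rw [Q00, Q2_00]; norm_num
  constructor
  · -- i - 1 ∈ W
    by_contra hnl
    set a1 : G := Function.update a0 (i-1) 1 with ha1
    have hpos1 : 0 < cylProb mu Δ a1 := by
      apply cylProb_pos
      rintro p _ q _ hpq ⟨h1, h2⟩
      have hp : p = i - 1 := by
        by_contra hne
        rw [ha1, Function.update_of_ne hne] at h1
        exact absurd h1 (by simp [ha0])
      have hq : q = i - 1 := by
        by_contra hne
        rw [ha1, Function.update_of_ne hne] at h2
        exact absurd h2 (by simp [ha0])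
      omega
    have hc1 : condProb mu i 0 Δ a1 = 1 := by
      rw [cond_formula i Δ a1 0 hiΔ hl hr hpos1]
      have e1 : a1 (i-1) = 1 := by rw [ha1, Function.update_self]
      have e2 : a1 (i+1) = 0 := by
        rw [ha1, Function.update_of_ne (by omega)]
      rw [e1, e2, Q10, Q00, Q2_10]; norm_num
    have hMa := hM Δ hsub hiΔ 0 a0 hpos0
    have hMb := hM Δ hsub hiΔ 0 a1 hpos1
    have hWc : condProb mu i 0 W a0 = condProb mu i 0 W a1 := by
      apply condProb_congr
      intro t ht
      rw [ha1, Function.update_of_ne (by rintro rfl; exact hnl ht)]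
    rw [hc0] at hMa
    rw [hc1] at hMb
    rw [← hMa, ← hMb] at hWc
    norm_num at hWc
  · -- i + 1 ∈ W
    by_contra hnr
    set a1 : G := Function.update a0 (i+1) 1 with ha1
    have hpos1 : 0 < cylProb mu Δ a1 := by
      apply cylProb_pos
      rintro p _ q _ hpq ⟨h1, h2⟩
      have hp : p = i + 1 := by
        by_contra hne
        rw [ha1, Function.update_of_ne hne] at h1
        exact absurd h1 (by simp [ha0])
      have hq : q = i + 1 := by
        by_contra hne
        rw [ha1, Function.update_of_ne hne] at h2
        exact absurd h2 (by simp [ha0])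
      omega
    have hc1 : condProb mu i 0 Δ a1 = 1 := by
      rw [cond_formula i Δ a1 0 hiΔ hl hr hpos1]
      have e1 : a1 (i-1) = 0 := by rw [ha1, Function.update_of_ne (by omega)]
      have e2 : a1 (i+1) = 1 := by rw [ha1, Function.update_self]
      rw [e1, e2, Q00, Q01, Q2_01]; norm_num
    have hMa := hM Δ hsub hiΔ 0 a0 hpos0
    have hMb := hM Δ hsub hiΔ 0 a1 hpos1
    have hWc : condProb mu i 0 W a0 = condProb mu i 0 W a1 := by
      apply condProb_congr
      intro t ht
      rw [ha1, Function.update_of_ne (by rintro rfl; exact hnr ht)]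
    rw [hc0] at hMa
    rw [hc1] at hMb
    rw [← hMa, ← hMb] at hWc
    norm_num at hWc





lemma pi0_0 : pi0 0 = 2/3 := by simp [pi0]
lemma pi0_1 : pi0 1 = 1/3 := by simp [pi0]

lemma sort_pair (i : ℤ) : ({i, i+1} : Finset ℤ).sort (· ≤ ·) = [i, i+1] := by
  apply sort_char
  · simp only [List.pairwise_cons, List.mem_singleton]
    refine ⟨fun t ht => by rw [ht]; omega, by simp⟩
  · intro x
    simp only [List.mem_cons, List.mem_singleton, List.not_mem_nil, or_false,
      Finset.mem_insert, Finset.mem_singleton]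

lemma f0_pair (i : ℤ) (a : G) : f0 [i, i+1] a = pi0 (a i) * Q (a i) (a (i+1)) := by
  rw [f0_cons, w_cons, w_nil, show ((i+1) - i).toNat = 1 by omega, pow_one, mul_one]

lemma cylProb_single (i : ℤ) (a : G) : cylProb mu {i} a = pi0 (a i) := by
  rw [MAIN, Finset.sort_singleton, f0_cons, w_nil, mul_one]

lemma cond_pair (i : ℤ) (a : G) :
    condProb mu (i+1) 0 {i} a = (pi0 (a i) * Q (a i) 0) / pi0 (a i) := by
  unfold condProb
  have hv : (i+1) ∉ ({i} : Finset ℤ) := by simp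
  rw [numer_eq (i+1) 0 {i} hv a, cylProb_single]
  have hpair : (insert (i+1) ({i} : Finset ℤ)) = {i, i+1} := Finset.pair_comm (i+1) i
  rw [hpair, sort_pair, f0_pair]
  rw [Function.update_of_ne (by omega), Function.update_self]

lemma cylProb_pair (i : ℤ) (a : G) :
    cylProb mu {i, i+1} a = pi0 (a i) * Q (a i) (a (i+1)) := by
  rw [MAIN, sort_pair, f0_pair]

theorem final :
    ∃ μ : Measure (ℤ → Fin 2), IsProbabilityMeasure μ ∧
      (∀ i : ℤ, (μ {x | x i = 0}).toReal = 2 / 3) ∧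
      (∀ (i : ℤ) (a : ℤ → Fin 2), a i = 0 → condProb μ (i + 1) 0 {i} a = 1 / 2) ∧
      (∀ (i : ℤ) (a : ℤ → Fin 2), a i = 1 → condProb μ (i + 1) 0 {i} a = 1) ∧
      (∀ (i : ℤ) (a : ℤ → Fin 2), a i = 1 → a (i + 1) = 1 →
        cylProb μ {i, i + 1} a = 0) ∧
      ¬ (∀ (W : Finset ℤ) (a : ℤ → Fin 2), 0 < cylProb μ W a) ∧
      (∀ i : ℤ, IsMarkovNbhd μ i {i - 1, i + 1} ∧
        ∀ W : Finset ℤ, IsMarkovNbhd μ i W → ({i - 1, i + 1} : Finset ℤ) ⊆ W) ∧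
      (∀ (i : ℤ) (W₁ W₂ : Finset ℤ), IsMarkovNbhd μ i W₁ → IsMarkovNbhd μ i W₂ →
        IsMarkovNbhd μ i (W₁ ∩ W₂)) := by
  refine ⟨mu, inferInstance, ?_, ?_, ?_, ?_, ?_, ?_, ?_⟩
  · intro i
    have hset : {x : ℤ → Fin 2 | x i = 0}
        = {x : ℤ → Fin 2 | ∀ w ∈ ({i} : Finset ℤ), x w = (fun _ => (0 : Fin 2)) w} := by
      ext x; simp
    rw [hset]
    have := cylProb_single i (fun _ => 0)
    unfold cylProb at this
    rw [this, pi0_0]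
  · intro i a h
    rw [cond_pair, h, pi0_0, Q00]
    norm_num
  · intro i a h
    rw [cond_pair, h, pi0_1, Q10]
    norm_num
  · intro i a h1 h2
    rw [cylProb_pair, h1, h2, Q11, mul_zero]
  · intro hall
    have := hall {0, 1} (fun _ => 1)
    have h0 : cylProb mu {(0 : ℤ), 1} (fun _ => 1) = 0 := by
      have := cylProb_pair 0 (fun _ => 1)
      norm_num at this ⊢
      rw [this, Q11, mul_zero]
    rw [h0] at this
    exact absurd this (lt_irrefl 0)
  · intro i
    have hi : i ∉ ({i - 1, i + 1} : Finset ℤ) := by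
      simp only [Finset.mem_insert, Finset.mem_singleton]
      omega
    have hl : i - 1 ∈ ({i - 1, i + 1} : Finset ℤ) := Finset.mem_insert_self _ _
    have hr : i + 1 ∈ ({i - 1, i + 1} : Finset ℤ) :=
      Finset.mem_insert_of_mem (Finset.mem_singleton_self _)
    refine ⟨markov_of_mem i _ hl hr hi, fun W hW => ?_⟩
    obtain ⟨h1, h2⟩ := min_mem i W hW
    exact Finset.insert_subset h1 (Finset.singleton_subset_iff.mpr h2)
  · intro i W₁ W₂ h1 h2
    obtain ⟨h1l, h1r⟩ := min_mem i W₁ h1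
    obtain ⟨h2l, h2r⟩ := min_mem i W₂ h2
    exact markov_of_mem i _ (Finset.mem_inter.mpr ⟨h1l, h2l⟩)
      (Finset.mem_inter.mpr ⟨h1r, h2r⟩)
      (fun h => h1.1 (Finset.mem_inter.mp h).1)



end Chain

/-- There exists a random field (the stationary Markov chain on `{0,1}` indexed by
`ℤ` with transition matrix `P(0,0) = P(0,1) = 1/2`, `P(1,0) = 1`, `P(1,1) = 0`,
stationary distribution `π(0) = 2/3`) that does not satisfy the positivity
condition — any configuration with two consecutive 1's has probability zero —
yet satisfies the Markov intersection property: for each node `i`, `{i−1, i+1}`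
is a Markov neighborhood of `i` contained in every Markov neighborhood of `i`. -/
theorem exists_nonpositive_field_with_intersection_property :
    ∃ μ : Measure (ℤ → Fin 2), IsProbabilityMeasure μ ∧
      (∀ i : ℤ, (μ {x | x i = 0}).toReal = 2 / 3) ∧
      (∀ (i : ℤ) (a : ℤ → Fin 2), a i = 0 → condProb μ (i + 1) 0 {i} a = 1 / 2) ∧
      (∀ (i : ℤ) (a : ℤ → Fin 2), a i = 1 → condProb μ (i + 1) 0 {i} a = 1) ∧
      (∀ (i : ℤ) (a : ℤ → Fin 2), a i = 1 → a (i + 1) = 1 →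
        cylProb μ {i, i + 1} a = 0) ∧
      ¬ (∀ (W : Finset ℤ) (a : ℤ → Fin 2), 0 < cylProb μ W a) ∧
      (∀ i : ℤ, IsMarkovNbhd μ i {i - 1, i + 1} ∧
        ∀ W : Finset ℤ, IsMarkovNbhd μ i W → ({i - 1, i + 1} : Finset ℤ) ⊆ W) ∧
      (∀ (i : ℤ) (W₁ W₂ : Finset ℤ), IsMarkovNbhd μ i W₁ → IsMarkovNbhd μ i W₂ →
        IsMarkovNbhd μ i (W₁ ∩ W₂)) :=
  Chain.final
end

section
/- Assume the joint law P satisfies the Markov intersection property, and for v ∈ V define ne(v) as the intersection of all Markov neighborhoods of v, and assume v has at least one finite Markov neighborhood. Then ne(v) is itself a Markov neighborhood of v, and it is the smallest one: ne(v) ⊆ W for every Markov neighborhood W of v. -/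
open MeasureTheory

/-- Assume the Markov intersection property holds at `v` and `v` has at least one
(finite) Markov neighborhood. Then the intersection `ne(v)` of all Markov
neighborhoods of `v` is a finite set which is itself a Markov neighborhood of `v`,
and it is the smallest one. -/
theorem basic_neighborhood_isMarkov {V A : Type*} [Countable V] [DecidableEq V]
    [MeasurableSpace A] [Fintype A]
    (μ : Measure (V → A)) [IsProbabilityMeasure μ] (v : V)
    (hinter : ∀ W₁ W₂ : Finset V, IsMarkovNbhd μ v W₁ → IsMarkovNbhd μ v W₂ →
      IsMarkovNbhd μ v (W₁ ∩ W₂))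
    (hex : ∃ W : Finset V, IsMarkovNbhd μ v W) :
    ∃ N : Finset V,
      (↑N : Set V) = {w | ∀ W : Finset V, IsMarkovNbhd μ v W → w ∈ W} ∧
      IsMarkovNbhd μ v N ∧
      ∀ W : Finset V, IsMarkovNbhd μ v W → N ⊆ W := by
  classical
  obtain ⟨W₀, hW₀⟩ := hex
  have key : ∀ B : Finset V, ∃ M, IsMarkovNbhd μ v M ∧
      ∀ w ∈ B, (¬ ∀ W : Finset V, IsMarkovNbhd μ v W → w ∈ W) → w ∉ M := by
    intro B
    induction B using Finset.induction_on with
    | empty => exact ⟨W₀, hW₀, by simp⟩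
    | @insert w B' _ ih =>
      obtain ⟨M, hM, hMe⟩ := ih
      by_cases hw : ∀ W : Finset V, IsMarkovNbhd μ v W → w ∈ W
      · refine ⟨M, hM, ?_⟩
        intro x hx hxS
        rcases Finset.mem_insert.mp hx with rfl | hx'
        · exact absurd hw hxS
        · exact hMe x hx' hxS
      · push_neg at hw
        obtain ⟨W, hW, hwW⟩ := hw
        refine ⟨M ∩ W, hinter _ _ hM hW, ?_⟩
        intro x hx hxS hxMW
        rcases Finset.mem_insert.mp hx with rfl | hx'
        · exact hwW (Finset.mem_inter.mp hxMW).2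
        · exact hMe x hx' hxS (Finset.mem_inter.mp hxMW).1
  obtain ⟨M, hM, hMe⟩ := key W₀
  refine ⟨W₀ ∩ M, ?_, hinter _ _ hW₀ hM, ?_⟩
  · ext x
    simp only [Finset.coe_inter, Set.mem_inter_iff, Finset.mem_coe, Set.mem_setOf_eq]
    constructor
    · rintro ⟨hx₀, hxM⟩ W hW
      by_contra h
      exact hMe x hx₀ (fun hall => h (hall W hW)) hxM
    · intro h
      exact ⟨h W₀ hW₀, h M hM⟩
  · intro W hW w hw
    by_contra h
    exact hMe w (Finset.mem_inter.mp hw).1 (fun hall => h (hall W hW))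
      (Finset.mem_inter.mp hw).2
end

section
/- (Symmetry of basic neighborhoods.) Assume the Markov intersection property holds and every vertex has a finite basic neighborhood ne(v). Define the graph G = (V, E) by (v,w) ∈ E iff w ∈ ne(v). Then G is undirected: if w ∈ ne(v) then v ∈ ne(w). -/
open MeasureTheory

/-! If `w ∈ ne v` but `v ∉ ne w`, then `X w` is conditionally independent of `X v` given any
`Γ ⊇ ne w` avoiding `v` and `w`, so conditioning on `X w` on top of `Γ` does not change the law
of `X v`. Hence `(ne v ∪ ne w) \ {w}` is already a Markov neighborhood of `v`, contradicting the
minimality of `ne v`. -/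

section MarkovNbhd

variable {V A : Type*} [MeasurableSpace A] {μ : Measure (V → A)}

lemma cylProb_mono [IsFiniteMeasure μ] {Δ Δ' : Finset V} (h : Δ ⊆ Δ') (a : V → A) :
    cylProb μ Δ' a ≤ cylProb μ Δ a :=
  ENNReal.toReal_mono (measure_ne_top μ _) (measure_mono fun _ hx u hu => hx u (h hu))

variable [DecidableEq V]

lemma cylProb_update_of_notMem {Δ : Finset V} {w : V} (hw : w ∉ Δ) (a : V → A) (b : A) :
    cylProb μ Δ (Function.update a w b) = cylProb μ Δ a := by
  unfold cylProb
  congr 2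
  ext x
  exact forall₂_congr fun u hu => by rw [Function.update_of_ne (ne_of_mem_of_not_mem hu hw)]

lemma condProb_update_of_notMem {Δ : Finset V} {w : V} (hw : w ∉ Δ) (v : V) (av : A)
    (a : V → A) (b : A) :
    condProb μ v av Δ (Function.update a w b) = condProb μ v av Δ a := by
  unfold condProb
  rw [cylProb_update_of_notMem hw]
  congr 3
  ext x
  exact and_congr_right fun _ => forall₂_congr fun u hu => by
    rw [Function.update_of_ne (ne_of_mem_of_not_mem hu hw)]

lemma condProb_self_eq_div (v : V) (Δ : Finset V) (a : V → A) :
    condProb μ v (a v) Δ a = cylProb μ (insert v Δ) a / cylProb μ Δ a := by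
  simp only [condProb, cylProb, Finset.forall_mem_insert]

lemma exists_cylProb_insert_update_pos [IsFiniteMeasure μ] [Countable A] {Δ : Finset V}
    {a : V → A} (h : 0 < cylProb μ Δ a) (w : V) :
    ∃ b : A, 0 < cylProb μ (insert w Δ) (Function.update a w b) := by
  by_contra! hzero
  have hcover : {x : V → A | ∀ u ∈ Δ, x u = a u}
      ⊆ ⋃ b : A, {x | ∀ u ∈ insert w Δ, x u = Function.update a w b u} := by
    intro x hx
    refine Set.mem_iUnion.2 ⟨x w, fun u hu => ?_⟩
    by_cases huw : u = w
    · subst huw; simp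
    · rw [Function.update_of_ne huw, hx u (Finset.mem_of_mem_insert_of_ne hu huw)]
  have hnull : μ {x : V → A | ∀ u ∈ Δ, x u = a u} = 0 :=
    measure_mono_null hcover <| measure_iUnion_null_iff.2 fun b =>
      ((ENNReal.toReal_eq_zero_iff _).1 ((hzero b).antisymm ENNReal.toReal_nonneg)).resolve_right
        (measure_ne_top μ _)
  simp [cylProb, hnull] at h

/-- Forgetting `X w` does not change the conditional law of `X v`: by the Markov property at
`w`, `p(a_w | a_Γ, a_v) = p(a_w | a_Γ)`, and Bayes' rule turns this into
`p(a_v | a_Γ, a_w) = p(a_v | a_Γ)`. -/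
lemma IsMarkovNbhd.condProb_erase [IsFiniteMeasure μ] {v w : V} {W Δ : Finset V}
    (hw : IsMarkovNbhd μ w W) (hWΔ : W ⊆ Δ) (hvΔ : v ∉ Δ) (hvw : v ≠ w) (av : A) {a : V → A}
    (hpos : 0 < cylProb μ Δ a) :
    condProb μ v av Δ a = condProb μ v av (Δ.erase w) a := by
  by_cases hwΔ : w ∈ Δ
  swap
  · rw [Finset.erase_eq_of_notMem hwΔ]
  obtain ⟨Γ, hwΓ, rfl⟩ : ∃ Γ, w ∉ Γ ∧ Δ = insert w Γ :=
    ⟨Δ.erase w, Finset.notMem_erase w Δ, (Finset.insert_erase hwΔ).symm⟩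
  have hvΓ : v ∉ Γ := fun h => hvΔ (Finset.mem_insert_of_mem h)
  have hWΓ : W ⊆ Γ := (Finset.subset_insert_iff_of_notMem hw.1).1 hWΔ
  rw [Finset.erase_insert hwΓ, ← condProb_update_of_notMem hvΔ v av a av,
    ← condProb_update_of_notMem hvΓ v av a av]
  rw [← cylProb_update_of_notMem hvΔ a av] at hpos
  set a' := Function.update a v av
  rw [← show a' v = av from Function.update_self v av a, condProb_self_eq_div, condProb_self_eq_div]
  have hΓpos : 0 < cylProb μ Γ a' := hpos.trans_le (cylProb_mono (Finset.subset_insert w Γ) a')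
  rcases (show 0 ≤ cylProb μ (insert v Γ) a' from ENNReal.toReal_nonneg).eq_or_lt with hv0 | hvpos
  · have hvw0 : cylProb μ (insert v (insert w Γ)) a' = 0 :=
      ((cylProb_mono (Finset.insert_subset_insert v (Finset.subset_insert w Γ)) a').trans
        hv0.symm.le).antisymm ENNReal.toReal_nonneg
    rw [← hv0, hvw0, zero_div, zero_div]
  have hwvΓ : w ∉ insert v Γ := by simp [hvw.symm, hwΓ]
  have hindep : condProb μ w (a' w) (insert v Γ) a' = condProb μ w (a' w) Γ a' :=
    (hw.2 _ (hWΓ.trans (Finset.subset_insert v Γ)) hwvΓ _ a' hvpos).trans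
      (hw.2 Γ hWΓ hwΓ _ a' hΓpos).symm
  rw [condProb_self_eq_div, condProb_self_eq_div, Finset.insert_comm,
    div_eq_div_iff hvpos.ne' hΓpos.ne'] at hindep
  rw [div_eq_div_iff hpos.ne' hΓpos.ne', hindep]
  ring

lemma condProb_eq_condProb_update [IsFiniteMeasure μ] {v w : V} {Wv Ww Γ : Finset V}
    (hv : IsMarkovNbhd μ v Wv) (hw : IsMarkovNbhd μ w Ww) (hWwΓ : Ww ⊆ Γ)
    (hWvΓ : Wv ⊆ insert w Γ) (hvΓ : v ∉ Γ) (hwΓ : w ∉ Γ) (hvw : v ≠ w) (av : A)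
    (a : V → A) {b : A} (hpos : 0 < cylProb μ (insert w Γ) (Function.update a w b)) :
    condProb μ v av Γ a = condProb μ v av Wv (Function.update a w b) := by
  have hvwΓ : v ∉ insert w Γ := by simp [hvw, hvΓ]
  calc condProb μ v av Γ a = condProb μ v av Γ (Function.update a w b) :=
        (condProb_update_of_notMem hwΓ v av a b).symm
    _ = condProb μ v av (insert w Γ) (Function.update a w b) := by
        rw [hw.condProb_erase (hWwΓ.trans (Finset.subset_insert w Γ)) hvwΓ hvw av hpos,
          Finset.erase_insert hwΓ]
    _ = condProb μ v av Wv (Function.update a w b) := hv.2 _ hWvΓ hvwΓ av _ hpos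

lemma IsMarkovNbhd.erase_union [IsFiniteMeasure μ] [Countable A] {v w : V} {Wv Ww : Finset V}
    (hv : IsMarkovNbhd μ v Wv) (hw : IsMarkovNbhd μ w Ww) (hvWw : v ∉ Ww) (hvw : v ≠ w) :
    IsMarkovNbhd μ v ((Wv ∪ Ww).erase w) := by
  set N := (Wv ∪ Ww).erase w
  have hvN : v ∉ N := by simp [N, hv.1, hvWw]
  have hWwN : Ww ⊆ N := fun u hu =>
    Finset.mem_erase.2 ⟨ne_of_mem_of_not_mem hu hw.1, Finset.mem_union_right Wv hu⟩
  have hWvN : Wv ⊆ insert w N :=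
    Finset.subset_union_left.trans (Finset.insert_erase_subset w _)
  refine ⟨hvN, fun Δ hNΔ hvΔ av a hpos => ?_⟩
  have hNΓ : N ⊆ Δ.erase w := by
    simpa [N, Finset.erase_idem] using Finset.erase_subset_erase w hNΔ
  have hvΓ : v ∉ Δ.erase w := fun h => hvΔ (Finset.mem_of_mem_erase h)
  have hwΓ : w ∉ Δ.erase w := Finset.notMem_erase w Δ
  obtain ⟨b, hb⟩ := exists_cylProb_insert_update_pos
    (hpos.trans_le (cylProb_mono (Finset.erase_subset w Δ) a)) w
  have hbN : 0 < cylProb μ (insert w N) (Function.update a w b) :=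
    hb.trans_le (cylProb_mono (Finset.insert_subset_insert w hNΓ) _)
  rw [hw.condProb_erase (hWwN.trans hNΔ) hvΔ hvw av hpos,
    condProb_eq_condProb_update hv hw (hWwN.trans hNΓ)
      (hWvN.trans (Finset.insert_subset_insert w hNΓ)) hvΓ hwΓ hvw av a hb,
    condProb_eq_condProb_update hv hw hWwN hWvN hvN (Finset.notMem_erase w _) hvw av a hbN]

end MarkovNbhd

theorem basic_neighborhood_symm_general {V A : Type*} [DecidableEq V]
    [MeasurableSpace A] [Fintype A]
    (μ : Measure (V → A)) [IsProbabilityMeasure μ]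
    (ne : V → Finset V)
    (hne : ∀ v, IsMarkovNbhd μ v (ne v) ∧
      ∀ W : Finset V, IsMarkovNbhd μ v W → ne v ⊆ W)
    (v w : V) (hw : w ∈ ne v) :
    v ∈ ne w := by
  by_contra hv
  have hvw : v ≠ w := fun h => (hne v).1.1 (h ▸ hw)
  have hN := (hne v).1.erase_union (hne w).1 hv hvw
  exact Finset.notMem_erase w _ ((hne v).2 _ hN hw)

/-- Symmetry of basic neighborhoods: assume the Markov intersection property and
that every vertex `v` has a smallest (basic) Markov neighborhood `ne v`. Define the
graph with an edge `(v,w)` iff `w ∈ ne v`; then the graph is undirected, i.e.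
`w ∈ ne v` implies `v ∈ ne w`. -/
theorem basic_neighborhood_symm {V A : Type*} [Countable V] [DecidableEq V]
    [MeasurableSpace A] [Fintype A]
    (μ : Measure (V → A)) [IsProbabilityMeasure μ]
    (hinter : ∀ (v : V) (W₁ W₂ : Finset V), IsMarkovNbhd μ v W₁ → IsMarkovNbhd μ v W₂ →
      IsMarkovNbhd μ v (W₁ ∩ W₂))
    (ne : V → Finset V)
    (hne : ∀ v, IsMarkovNbhd μ v (ne v) ∧
      ∀ W : Finset V, IsMarkovNbhd μ v W → ne v ⊆ W)
    (v w : V) (hw : w ∈ ne v) :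
    v ∈ ne w :=
  basic_neighborhood_symm_general μ ne hne v w hw
end

section
/- Let ne(v) be the basic (smallest) Markov neighborhood of v. If a finite neighborhood W of v (v ∉ W) satisfies p(a_v | a_W) = p(a_v | a_{ne(v)}) for all a_v ∈ A and all configurations a_{W ∪ ne(v)} with p(a_{W ∪ ne(v)}) > 0, then W is a Markov neighborhood of v. -/
set_option linter.unusedSectionVars false
set_option linter.unusedVariables false

open MeasureTheory

section Atoms
variable {A : Type*} [MeasurableSpace A]

/-- The measurable atom of a point: intersection of all measurable sets containing it. -/
def atomOf (a : A) : Set A := ⋂ S ∈ {S : Set A | MeasurableSet S ∧ a ∈ S}, S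

lemma self_mem_atomOf (a : A) : a ∈ atomOf a := by
  simp only [atomOf, Set.mem_iInter, Set.mem_setOf_eq]
  exact fun S hS => hS.2

lemma atomOf_subset {a : A} {S : Set A} (hS : MeasurableSet S) (ha : a ∈ S) :
    atomOf a ⊆ S := by
  intro x hx
  simp only [atomOf, Set.mem_iInter, Set.mem_setOf_eq] at hx
  exact hx S ⟨hS, ha⟩

lemma measurableSet_atomOf [Fintype A] (a : A) : MeasurableSet (atomOf a) := by
  classical
  exact MeasurableSet.biInter (Set.to_countable _) fun S hS => hS.1

lemma mem_atomOf_symm {a b : A} (hb : b ∈ atomOf a) : a ∈ atomOf b := by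
  simp only [atomOf, Set.mem_iInter, Set.mem_setOf_eq]
  rintro S ⟨hS, hbS⟩
  by_contra haS
  exact (atomOf_subset hS.compl haS) hb hbS

lemma atomOf_eq_of_mem {a b : A} (hb : b ∈ atomOf a) : atomOf b = atomOf a := by
  apply Set.Subset.antisymm
  · intro x hx
    simp only [atomOf, Set.mem_iInter, Set.mem_setOf_eq] at hx ⊢
    rintro S ⟨hS, haS⟩
    exact hx S ⟨hS, atomOf_subset hS haS hb⟩
  · intro x hx
    have ha : a ∈ atomOf b := mem_atomOf_symm hb
    simp only [atomOf, Set.mem_iInter, Set.mem_setOf_eq] at hx ⊢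
    rintro S ⟨hS, hbS⟩
    exact hx S ⟨hS, atomOf_subset hS hbS ha⟩

open Classical in
/-- Pick a canonical representative of a set, defaulting to `d`. -/
noncomputable def pickA (s : Set A) (d : A) : A := if h : s.Nonempty then h.some else d

lemma pickA_mem {s : Set A} (h : s.Nonempty) (d : A) : pickA s d ∈ s := by
  classical
  rw [pickA]
  rw [dif_pos h]
  exact h.some_mem

lemma pickA_congr {s : Set A} (h : s.Nonempty) (d d' : A) : pickA s d = pickA s d' := by
  classical
  rw [pickA, pickA, dif_pos h, dif_pos h]

/-- Canonical representative of the atom of `a`. -/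
noncomputable def rep (a : A) : A := pickA (atomOf a) a

lemma rep_mem (a : A) : rep a ∈ atomOf a := pickA_mem ⟨a, self_mem_atomOf a⟩ a

lemma rep_eq_of_atom_eq {a b : A} (h : atomOf a = atomOf b) : rep a = rep b := by
  rw [rep, rep, h]; exact pickA_congr ⟨b, self_mem_atomOf b⟩ a b

lemma atomOf_rep (a : A) : atomOf (rep a) = atomOf a := atomOf_eq_of_mem (rep_mem a)

lemma rep_rep (a : A) : rep (rep a) = rep a := rep_eq_of_atom_eq (atomOf_rep a)

lemma rep_preimage {S : Set A} (hS : MeasurableSet S) : rep ⁻¹' S = S := by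
  ext a
  simp only [Set.mem_preimage]
  constructor
  · intro hr
    have : a ∈ atomOf (rep a) := mem_atomOf_symm (rep_mem a)
    exact atomOf_subset hS hr this
  · intro ha
    exact atomOf_subset hS ha (rep_mem a)

end Atoms

section Prod
variable {V A : Type*} [MeasurableSpace A] [DecidableEq V]

/-- Measurable sets in the product are invariant under coordinatewise `rep`. -/
lemma F_preimage_eq {t : Set (V → A)} (ht : MeasurableSet t) :
    (fun x (w : V) => rep (x w)) ⁻¹' t = t := by
  have ht' : MeasurableSet[MeasurableSpace.generateFrom
      {B : Set (V → A) | ∃ (w : V) (S : Set A), MeasurableSet S ∧ (fun x => x w) ⁻¹' S = B}] t := by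
    rw [← MeasurableSpace.pi_eq_generateFrom_projections]
    exact ht
  clear ht
  induction ht' with
  | basic s hs =>
    obtain ⟨w, S, hS, rfl⟩ := hs
    ext x
    simp only [Set.mem_preimage]
    rw [← Set.mem_preimage (f := rep), rep_preimage hS]
  | empty => simp
  | compl s hs ih => rw [Set.preimage_compl, ih]
  | iUnion f hf ih => rw [Set.preimage_iUnion]; exact Set.iUnion_congr ih

lemma measurableSet_atCyl [Fintype A] (Δ : Finset V) (a : V → A) :
    MeasurableSet {x : V → A | ∀ w ∈ Δ, x w ∈ atomOf (a w)} := by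
  have : {x : V → A | ∀ w ∈ Δ, x w ∈ atomOf (a w)}
      = ⋂ w ∈ (Δ : Set V), (fun x : V → A => x w) ⁻¹' atomOf (a w) := by
    ext x; simp
  rw [this]
  exact MeasurableSet.biInter (Δ : Set V).to_countable
    fun w _ => measurable_pi_apply w (measurableSet_atomOf (a w))

/-- Hull lemma: the measure of an equality cylinder equals that of the atom cylinder. -/
lemma measure_eqCyl (μ : Measure (V → A)) (Δ : Finset V) (a : V → A) :
    μ {x | ∀ w ∈ Δ, x w = a w} = μ {x | ∀ w ∈ Δ, x w ∈ atomOf (a w)} := by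
  apply le_antisymm
  · exact measure_mono fun x hx w hw => hx w hw ▸ self_mem_atomOf (a w)
  · conv_rhs => rw [measure_eq_iInf]
    refine le_iInf fun t => le_iInf fun hsub => le_iInf fun hmeas => measure_mono ?_
    intro y hy
    set y' : V → A := fun w => if w ∈ Δ then a w else y w with hy'def
    have hy' : y' ∈ {x : V → A | ∀ w ∈ Δ, x w = a w} := fun w hw => by
      simp [hy'def, if_pos hw]
    have hF : (fun w => rep (y w)) = fun w => rep (y' w) := by
      funext w
      by_cases hw : w ∈ Δ
      · have : atomOf (y w) = atomOf (a w) := atomOf_eq_of_mem (hy w hw)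
        simp only [hy'def, if_pos hw]
        exact rep_eq_of_atom_eq this
      · simp [hy'def, if_neg hw]
    have ht := F_preimage_eq (t := t) hmeas
    have h1 : y' ∈ t := hsub hy'
    rw [← ht] at h1 ⊢
    show (fun w => rep (y w)) ∈ t
    rw [hF]
    exact h1

/-- Finite decomposition of a measurable set over the atoms at one coordinate. -/
lemma measure_decomp [Fintype A] (μ : Measure (V → A)) {E : Set (V → A)}
    (hE : MeasurableSet E) (u : V) [DecidableEq A] :
    μ E = ∑ r ∈ Finset.univ.image (rep (A := A)),
      μ (E ∩ (fun x : V → A => x u) ⁻¹' atomOf r) := by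
  classical
  have hcover : E = ⋃ r ∈ Finset.univ.image (rep (A := A)),
      E ∩ (fun x : V → A => x u) ⁻¹' atomOf r := by
    ext x
    simp only [Set.mem_iUnion, Set.mem_inter_iff, Set.mem_preimage, Finset.mem_image,
      Finset.mem_univ, true_and, exists_prop]
    constructor
    · intro hx
      exact ⟨rep (x u), ⟨x u, rfl⟩, hx, by rw [atomOf_rep]; exact self_mem_atomOf _⟩
    · rintro ⟨r, -, hx, -⟩; exact hx
  conv_lhs => rw [hcover]
  rw [measure_biUnion_finset ?_ fun r _ =>
    hE.inter (measurable_pi_apply u (measurableSet_atomOf r))]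
  · intro r hr r' hr' hne
    simp only [Finset.coe_image, Set.mem_image] at hr hr'
    refine Set.disjoint_left.mpr fun x hx hx' => hne ?_
    have h1 : x u ∈ atomOf r := hx.2
    have h2 : x u ∈ atomOf r' := hx'.2
    obtain ⟨c, -, rfl⟩ := hr
    obtain ⟨c', -, rfl⟩ := hr'
    have : atomOf (rep c) = atomOf (rep c') := by
      rw [← atomOf_eq_of_mem h1, ← atomOf_eq_of_mem h2]
    calc rep c = rep (rep c) := (rep_rep c).symm
    _ = rep (rep c') := rep_eq_of_atom_eq this
    _ = rep c' := rep_rep c'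
  
end Prod

section Helpers

variable {V A : Type*} [MeasurableSpace A] [DecidableEq V]

lemma cylProb_anti (μ : Measure (V → A)) [IsProbabilityMeasure μ]
    {Δ₁ Δ₂ : Finset V} (hs : Δ₁ ⊆ Δ₂) (a : V → A) :
    cylProb μ Δ₂ a ≤ cylProb μ Δ₁ a :=
  ENNReal.toReal_mono (measure_ne_top μ _)
    (measure_mono fun x hx w hw => hx w (hs hw))

lemma cylProb_nonneg (μ : Measure (V → A)) (Δ : Finset V) (a : V → A) :
    0 ≤ cylProb μ Δ a := ENNReal.toReal_nonneg

lemma cylProb_congr (μ : Measure (V → A)) {Δ : Finset V} {a b : V → A}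
    (hab : ∀ w ∈ Δ, a w = b w) : cylProb μ Δ a = cylProb μ Δ b := by
  unfold cylProb
  congr 2
  ext x
  exact ⟨fun hx w hw => (hx w hw).trans (hab w hw),
    fun hx w hw => (hx w hw).trans (hab w hw).symm⟩

lemma condProb_congr (μ : Measure (V → A)) (v : V) (av : A) {Δ : Finset V} {a b : V → A}
    (hab : ∀ w ∈ Δ, a w = b w) : condProb μ v av Δ a = condProb μ v av Δ b := by
  unfold condProb
  rw [cylProb_congr μ hab]
  congr 3
  ext x
  exact ⟨fun hx => ⟨hx.1, fun w hw => (hx.2 w hw).trans (hab w hw)⟩,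
    fun hx => ⟨hx.1, fun w hw => (hx.2 w hw).trans (hab w hw).symm⟩⟩

lemma num_set_eq {v : V} {Δ : Finset V} (hv : v ∉ Δ) (av : A) (a : V → A) :
    {x : V → A | x v = av ∧ ∀ w ∈ Δ, x w = a w}
      = {x : V → A | ∀ w ∈ insert v Δ, x w = Function.update a v av w} := by
  ext x
  simp only [Set.mem_setOf_eq, Finset.mem_insert]
  constructor
  · rintro ⟨h1, h2⟩ w hw
    rcases hw with rfl | hw
    · rw [Function.update_self]; exact h1
    · rw [Function.update_of_ne (by rintro rfl; exact hv hw)]; exact h2 w hw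
  · intro hx
    refine ⟨?_, fun w hw => ?_⟩
    · have := hx v (Or.inl rfl)
      rwa [Function.update_self] at this
    · have := hx w (Or.inr hw)
      rwa [Function.update_of_ne (by rintro rfl; exact hv hw)] at this

/-- One-step decomposition of a cylinder measure over the atoms at a new coordinate. -/
lemma eq_step [Fintype A] [DecidableEq A] (μ : Measure (V → A)) (Δ : Finset V) (a : V → A)
    {u : V} (hu : u ∉ Δ) :
    μ {x | ∀ w ∈ Δ, x w = a w}
      = ∑ r ∈ Finset.univ.image (rep (A := A)),
          μ {x | ∀ w ∈ insert u Δ, x w = Function.update a u r w} := by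
  rw [measure_eqCyl, measure_decomp μ (measurableSet_atCyl Δ a) u]
  refine Finset.sum_congr rfl fun r _ => ?_
  rw [measure_eqCyl]
  congr 1
  ext x
  simp only [Set.mem_inter_iff, Set.mem_setOf_eq, Set.mem_preimage, Finset.mem_insert]
  constructor
  · rintro ⟨h1, h2⟩ w hw
    rcases hw with rfl | hw
    · rw [Function.update_self]; exact h2
    · rw [Function.update_of_ne (by rintro rfl; exact hu hw)]; exact h1 w hw
  · intro hx
    refine ⟨fun w hw => ?_, ?_⟩
    · have := hx w (Or.inr hw)
      rwa [Function.update_of_ne (by rintro rfl; exact hu hw)] at this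
    · have := hx u (Or.inl rfl)
      rwa [Function.update_self] at this

lemma cylProb_step [Fintype A] [DecidableEq A] (μ : Measure (V → A)) [IsProbabilityMeasure μ]
    (Δ : Finset V) (a : V → A) {u : V} (hu : u ∉ Δ) :
    cylProb μ Δ a
      = ∑ r ∈ Finset.univ.image (rep (A := A)),
          cylProb μ (insert u Δ) (Function.update a u r) := by
  rw [cylProb, eq_step μ Δ a hu, ENNReal.toReal_sum fun r _ => measure_ne_top μ _]
  rfl

lemma numProb_step [Fintype A] [DecidableEq A] (μ : Measure (V → A)) [IsProbabilityMeasure μ]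
    (Δ : Finset V) (a : V → A) (v : V) (av : A) {u : V} (hu : u ∉ Δ) (hvΔ : v ∉ Δ)
    (huv : u ≠ v) :
    (μ {x | x v = av ∧ ∀ w ∈ Δ, x w = a w}).toReal
      = ∑ r ∈ Finset.univ.image (rep (A := A)),
          (μ {x | x v = av ∧ ∀ w ∈ insert u Δ, x w = Function.update a u r w}).toReal := by
  have huvΔ : u ∉ insert v Δ := by
    simp only [Finset.mem_insert]
    rintro (rfl | hw)
    · exact huv rfl
    · exact hu hw
  rw [num_set_eq hvΔ av a, eq_step μ (insert v Δ) (Function.update a v av) huvΔ,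
    ENNReal.toReal_sum fun r _ => measure_ne_top μ _]
  refine Finset.sum_congr rfl fun r _ => ?_
  have hvΔ' : v ∉ insert u Δ := by
    simp only [Finset.mem_insert]
    rintro (rfl | hw)
    · exact huv rfl
    · exact hvΔ hw
  rw [num_set_eq hvΔ' av (Function.update a u r), Finset.insert_comm,
    Function.update_comm (Ne.symm huv) av r a]

end Helpers

/-- If a finite neighborhood `W` of `v` (`v ∉ W`) satisfies
`p(a_v | a_W) = p(a_v | a_{ne(v)})` for all `a_v` and all configurations
`a` on `W ∪ ne(v)` with positive probability, where `ne v` is the basic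
(smallest) Markov neighborhood of `v`, then `W` is a Markov neighborhood of `v`. -/
theorem isMarkovNbhd_of_matching_conditionals {V A : Type*} [Countable V] [DecidableEq V]
    [MeasurableSpace A] [Fintype A]
    (μ : Measure (V → A)) [IsProbabilityMeasure μ]
    (v : V) (nev : Finset V)
    (hnev : IsMarkovNbhd μ v nev)
    (hmin : ∀ W : Finset V, IsMarkovNbhd μ v W → nev ⊆ W)
    (W : Finset V) (hv : v ∉ W)
    (h : ∀ (av : A) (a : V → A), 0 < cylProb μ (W ∪ nev) a →
      condProb μ v av W a = condProb μ v av nev a) :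
    IsMarkovNbhd μ v W := by
  classical
  refine ⟨hv, ?_⟩
  have key : ∀ S : Finset V, ∀ Δ : Finset V, W ⊆ Δ → v ∉ Δ → nev \ Δ ⊆ S →
      ∀ (av : A) (a : V → A), 0 < cylProb μ Δ a →
        condProb μ v av Δ a = condProb μ v av W a := by
    intro S
    induction S using Finset.induction_on with
    | empty =>
      intro Δ hWΔ hvΔ hsub av a hpos
      have hnevΔ : nev ⊆ Δ := by
        intro x hx
        by_contra hxΔ
        exact Finset.notMem_empty x (hsub (Finset.mem_sdiff.mpr ⟨hx, hxΔ⟩))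
      have hWnev : 0 < cylProb μ (W ∪ nev) a :=
        lt_of_lt_of_le hpos (cylProb_anti μ (Finset.union_subset hWΔ hnevΔ) a)
      rw [hnev.2 Δ hnevΔ hvΔ av a hpos, ← h av a hWnev]
    | @insert u S' hu ih =>
      intro Δ hWΔ hvΔ hsub av a hpos
      by_cases hcase : u ∈ nev ∧ u ∉ Δ
      · obtain ⟨hunev, huΔ⟩ := hcase
        have huv : u ≠ v := fun e => hnev.1 (e ▸ hunev)
        have huW : u ∉ W := fun hw => huΔ (hWΔ hw)
        have hWΔ' : W ⊆ insert u Δ := hWΔ.trans (Finset.subset_insert u Δ)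
        have hvΔ' : v ∉ insert u Δ := by
          simp only [Finset.mem_insert]
          rintro (rfl | hw)
          · exact huv rfl
          · exact hvΔ hw
        have hsub' : nev \ insert u Δ ⊆ S' := by
          intro x hx
          rw [Finset.mem_sdiff] at hx
          have hxΔ : x ∉ Δ := fun hh => hx.2 (Finset.mem_insert_of_mem hh)
          have hxu : x ≠ u := fun e => hx.2 (e ▸ Finset.mem_insert_self u Δ)
          exact (Finset.mem_insert.mp (hsub (Finset.mem_sdiff.mpr ⟨hx.1, hxΔ⟩))).resolve_left hxu
        set c := condProb μ v av W a with hc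
        -- per-atom identity
        have hterm : ∀ r ∈ Finset.univ.image (rep (A := A)),
            (μ {x | x v = av ∧ ∀ w ∈ insert u Δ, x w = Function.update a u r w}).toReal
              = c * cylProb μ (insert u Δ) (Function.update a u r) := by
          intro r _
          by_cases hpos' : 0 < cylProb μ (insert u Δ) (Function.update a u r)
          · have hIH := ih (insert u Δ) hWΔ' hvΔ' hsub' av (Function.update a u r) hpos'
            have hWr : condProb μ v av W (Function.update a u r) = c := by
              rw [hc]
              exact condProb_congr μ v av fun w hw =>
                Function.update_of_ne (by rintro rfl; exact huW hw) r a
            have hne : cylProb μ (insert u Δ) (Function.update a u r) ≠ 0 := ne_of_gt hpos'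
            have := hIH.trans hWr
            rw [condProb, div_eq_iff hne] at this
            exact this
          · have h0 : cylProb μ (insert u Δ) (Function.update a u r) = 0 :=
              le_antisymm (not_lt.mp hpos') (cylProb_nonneg μ _ _)
            have hle : (μ {x | x v = av ∧ ∀ w ∈ insert u Δ,
                x w = Function.update a u r w}).toReal
                ≤ cylProb μ (insert u Δ) (Function.update a u r) :=
              ENNReal.toReal_mono (measure_ne_top μ _) (measure_mono fun x hx => hx.2)
            have : (μ {x | x v = av ∧ ∀ w ∈ insert u Δ,
                x w = Function.update a u r w}).toReal = 0 :=
              le_antisymm (h0 ▸ hle) ENNReal.toReal_nonneg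
            rw [this, h0, mul_zero]
        have hnum := numProb_step μ Δ a v av huΔ hvΔ huv
        have hden := cylProb_step μ Δ a huΔ
        rw [condProb, hnum, Finset.sum_congr rfl hterm, ← Finset.mul_sum, ← hden]
        rw [mul_div_assoc, div_self (ne_of_gt hpos), mul_one]
      · have hsub'' : nev \ Δ ⊆ S' := by
          intro x hx
          have hx' := Finset.mem_sdiff.mp hx
          have hxu : x ≠ u := by
            rintro rfl
            exact hcase ⟨hx'.1, hx'.2⟩
          exact (Finset.mem_insert.mp (hsub hx)).resolve_left hxu
        exact ih Δ hWΔ hvΔ hsub'' av a hpos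
  intro Δ hWΔ hvΔ av a hpos
  exact key (nev \ Δ) Δ hWΔ hvΔ (subset_refl _) av a hpos
end
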